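/- arXiv:1812.02026 — 12 statements merged into one kernel-verified Lean document; each statement's English description precedes it below -/
import Mathlib

section
/- Let (X,r) be a left non-degenerate set-theoretic solution of the Yang–Baxter equation and define σ_z(x) = λ_z(ρ_{λ_x^{-1}(z)}(x)) for x,z ∈ X. Then λ_x ∘ σ_y = σ_{λ_x(y)} ∘ λ_x for all x,y ∈ X. -/
/- Write `y = λ_z(w)`, so that `σ_y(z) = λ_y(ρ_w(z))`. Expanding `λ_x λ_y` by the first YBE
component and then applying the second one turns `λ_x(σ_y(z))` into `λ_{λ_x(y)}(ρ_v(λ_x(z)))` with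
`v = λ_{ρ_z(x)}(w)`, and again by the first component `λ_{λ_x(z)}(v) = λ_x(y)`, i.e. `v` is exactly
the point `λ_{λ_x(z)}⁻¹(λ_x(y))` occurring in `σ_{λ_x(y)}(λ_x(z))`. -/

/-- The map `σ_z` of a left non-degenerate solution:
`σ_z(x) = λ_z(ρ_{λ_x⁻¹(z)}(x))`. -/
def sigmaMap {X : Type*} (lam : X → Equiv.Perm X) (rho : X → X → X) (z x : X) : X :=
  lam z (rho ((lam x).symm z) x)

theorem sigmaMap_lam_apply {X : Type*} (lam : X → Equiv.Perm X) (rho : X → X → X) (z w : X) :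
    sigmaMap lam rho (lam z w) z = lam (lam z w) (rho w z) := by
  rw [sigmaMap, Equiv.symm_apply_apply]

theorem stmt1_general {X : Type*} (lam : X → Equiv.Perm X) (rho : X → X → X)
    (hYB1 : ∀ x y z : X, lam x (lam y z) = lam (lam x y) (lam (rho y x) z))
    (hYB2 : ∀ x y z : X,
      lam (rho (lam y z) x) (rho z y) = rho (lam (rho y x) z) (lam x y)) :
    ∀ x y z : X,
      lam x (sigmaMap lam rho y z) = sigmaMap lam rho (lam x y) (lam x z) := by
  intro x y z
  obtain ⟨w, rfl⟩ := (lam z).surjective y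
  calc lam x (sigmaMap lam rho (lam z w) z)
      = lam (lam x (lam z w)) (lam (rho (lam z w) x) (rho w z)) := by
        rw [sigmaMap_lam_apply, hYB1]
    _ = lam (lam x (lam z w)) (rho (lam (rho z x) w) (lam x z)) := by rw [hYB2]
    _ = sigmaMap lam rho (lam x (lam z w)) (lam x z) := by
        rw [hYB1 x z w, sigmaMap_lam_apply]

theorem stmt1 {X : Type*} (lam : X → Equiv.Perm X) (rho : X → X → X)
    (hYB1 : ∀ x y z : X, lam x (lam y z) = lam (lam x y) (lam (rho y x) z))
    (hYB2 : ∀ x y z : X,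
      lam (rho (lam y z) x) (rho z y) = rho (lam (rho y x) z) (lam x y))
    (hYB3 : ∀ x y z : X, rho z (rho y x) = rho (rho z y) (rho (lam y z) x)) :
    ∀ x y z : X,
      lam x (sigmaMap lam rho y z) = sigmaMap lam rho (lam x y) (lam x z) :=
  stmt1_general lam rho hYB1 hYB2
end

section
/- If (X,r) is a bijective left non-degenerate solution of the Yang–Baxter equation, written r^{-1}(x,y) = (λ̂_x(y), ρ̂_y(x)), then for all x,z ∈ X one has σ_z(x) := λ_z(ρ_{λ_x^{-1}(z)}(x)) = λ_z(λ̂_z^{-1}(x)); in particular each σ_z is a bijection of X. -/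
section

variable {X : Type*} {lam : X → Equiv.Perm X} {rho lamhat rhohat : X → X → X}

theorem lamhat_rho_symm_apply (h : ∀ x y, lamhat (lam x y) (rho y x) = x) (x z : X) :
    lamhat z (rho ((lam x).symm z) x) = x := by
  simpa using h x ((lam x).symm z)

theorem lamhat_injective (h₁ : ∀ x y, lam (lamhat x y) (rhohat y x) = x)
    (h₂ : ∀ x y, rho (rhohat y x) (lamhat x y) = y) (z : X) :
    Function.Injective (lamhat z) := by
  intro a b hab
  have hrhohat : rhohat a z = rhohat b z :=
    (lam (lamhat z a)).injective (by rw [h₁, hab, h₁])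
  rw [← h₂ z a, ← h₂ z b, hab, hrhohat]

theorem lamhat_bijective (h₁ : ∀ x y, lam (lamhat x y) (rhohat y x) = x)
    (h₂ : ∀ x y, rho (rhohat y x) (lamhat x y) = y)
    (h : ∀ x y, lamhat (lam x y) (rho y x) = x) (z : X) :
    Function.Bijective (lamhat z) :=
  ⟨lamhat_injective h₁ h₂ z, fun x => ⟨_, lamhat_rho_symm_apply h x z⟩⟩

theorem lamhat_symm_sigmaMap (h : ∀ x y, lamhat (lam x y) (rho y x) = x) (x z : X) :
    lamhat z ((lam z).symm (sigmaMap lam rho z x)) = x := by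
  simpa [sigmaMap] using lamhat_rho_symm_apply h x z

theorem sigmaMap_bijective (h₁ : ∀ x y, lam (lamhat x y) (rhohat y x) = x)
    (h₂ : ∀ x y, rho (rhohat y x) (lamhat x y) = y)
    (h : ∀ x y, lamhat (lam x y) (rho y x) = x) (z : X) :
    Function.Bijective (sigmaMap lam rho z) := by
  have hcomp : lamhat z ∘ (fun x => rho ((lam x).symm z) x) = id :=
    funext (lamhat_rho_symm_apply h · z)
  have hinner : Function.Bijective fun x => rho ((lam x).symm z) x :=
    ((lamhat_bijective h₁ h₂ h z).of_comp_iff' _).mp (hcomp ▸ Function.bijective_id)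
  exact (lam z).bijective.comp hinner

end

theorem stmt2_general {X : Type*} (lam : X → Equiv.Perm X) (rho : X → X → X)
    (lamhat rhohat : X → X → X)
    -- `(x,y) ↦ (λ̂_x(y), ρ̂_y(x))` is a two-sided inverse of `r`, so `r` is bijective
    (hinv₁ : ∀ p : X × X,
      (fun q : X × X => (lam q.1 q.2, rho q.2 q.1))
        ((fun q : X × X => (lamhat q.1 q.2, rhohat q.2 q.1)) p) = p)
    (hinv₂ : ∀ p : X × X,
      (fun q : X × X => (lamhat q.1 q.2, rhohat q.2 q.1))
        ((fun q : X × X => (lam q.1 q.2, rho q.2 q.1)) p) = p) :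
    (∀ z : X, Function.Bijective (lamhat z)) ∧
    -- i.e. `σ_z(x) = λ_z(λ̂_z⁻¹(x))`, expressed as `λ̂_z(λ_z⁻¹(σ_z(x))) = x`
    (∀ x z : X, lamhat z ((lam z).symm (sigmaMap lam rho z x)) = x) ∧
    (∀ z : X, Function.Bijective (sigmaMap lam rho z)) := by
  have h₁ : ∀ x y, lam (lamhat x y) (rhohat y x) = x := fun x y =>
    congrArg Prod.fst (hinv₁ (x, y))
  have h₂ : ∀ x y, rho (rhohat y x) (lamhat x y) = y := fun x y =>
    congrArg Prod.snd (hinv₁ (x, y))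
  have h : ∀ x y, lamhat (lam x y) (rho y x) = x := fun x y =>
    congrArg Prod.fst (hinv₂ (x, y))
  exact ⟨lamhat_bijective h₁ h₂ h, lamhat_symm_sigmaMap h, sigmaMap_bijective h₁ h₂ h⟩

theorem stmt2 {X : Type*} (lam : X → Equiv.Perm X) (rho : X → X → X)
    (lamhat rhohat : X → X → X)
    (hYB1 : ∀ x y z : X, lam x (lam y z) = lam (lam x y) (lam (rho y x) z))
    (hYB2 : ∀ x y z : X,
      lam (rho (lam y z) x) (rho z y) = rho (lam (rho y x) z) (lam x y))
    (hYB3 : ∀ x y z : X, rho z (rho y x) = rho (rho z y) (rho (lam y z) x))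
    -- `(x,y) ↦ (λ̂_x(y), ρ̂_y(x))` is a two-sided inverse of `r`, so `r` is bijective
    (hinv₁ : ∀ p : X × X,
      (fun q : X × X => (lam q.1 q.2, rho q.2 q.1))
        ((fun q : X × X => (lamhat q.1 q.2, rhohat q.2 q.1)) p) = p)
    (hinv₂ : ∀ p : X × X,
      (fun q : X × X => (lamhat q.1 q.2, rhohat q.2 q.1))
        ((fun q : X × X => (lam q.1 q.2, rho q.2 q.1)) p) = p) :
    (∀ z : X, Function.Bijective (lamhat z)) ∧
    -- i.e. `σ_z(x) = λ_z(λ̂_z⁻¹(x))`, expressed as `λ̂_z(λ_z⁻¹(σ_z(x))) = x`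
    (∀ x z : X, lamhat z ((lam z).symm (sigmaMap lam rho z x)) = x) ∧
    (∀ z : X, Function.Bijective (sigmaMap lam rho z)) :=
  stmt2_general lam rho lamhat rhohat hinv₁ hinv₂
end

section
/- Let (X,r) be a left non-degenerate solution of the Yang–Baxter equation and define s: X × X → X × X by s(x,y) = (y, σ_y(x)), where σ_y(x) = λ_y(ρ_{λ_x^{-1}(y)}(x)). Then (X,s) is a left non-degenerate solution of the Yang–Baxter equation. Moreover, (X,r) is bijective if and only if (X,s) is bijective, if and only if (X,s) is right non-degenerate. -/
/-- `r × id` acting on `X × X × X`. -/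
def rOnFirstTwo {X : Type*} (r : X × X → X × X) : X × X × X → X × X × X :=
  fun t => ((r (t.1, t.2.1)).1, (r (t.1, t.2.1)).2, t.2.2)

/-- `id × r` acting on `X × X × X`. -/
def rOnLastTwo {X : Type*} (r : X × X → X × X) : X × X × X → X × X × X :=
  fun t => (t.1, (r (t.2.1, t.2.2)).1, (r (t.2.1, t.2.2)).2)

/-- The set-theoretic Yang–Baxter equation for a map `X × X → X × X`. -/
def IsYBSolution {X : Type*} (r : X × X → X × X) : Prop :=
  rOnFirstTwo r ∘ rOnLastTwo r ∘ rOnFirstTwo r =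
    rOnLastTwo r ∘ rOnFirstTwo r ∘ rOnLastTwo r

/-!
The shear `J(x, y, z) = (x, λ_x y, λ_x λ_y z)` is a bijection of `X³` that intertwines
`r × id` with `s × id` and `id × r` with `id × s`, so the braid relation for `r` transports to
`s`. In degree two, `F(x, y) = (x, λ_x y)` conjugates `r` to `s`, so `r` is bijective iff `s` is.
-/

open Function

theorem IsYBSolution.of_semiconj {X Y : Type*} {r : X × X → X × X} {s : Y × Y → Y × Y}
    (hr : IsYBSolution r) (J : X × X × X → Y × Y × Y) (hJ : Surjective J)
    (h₁ : Semiconj J (rOnFirstTwo r) (rOnFirstTwo s))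
    (h₂ : Semiconj J (rOnLastTwo r) (rOnLastTwo s)) :
    IsYBSolution s := by
  apply hJ.injective_comp_right
  calc (rOnFirstTwo s ∘ rOnLastTwo s ∘ rOnFirstTwo s) ∘ J
      = J ∘ (rOnFirstTwo r ∘ rOnLastTwo r ∘ rOnFirstTwo r) :=
        (h₁.comp_right (h₂.comp_right h₁)).comp_eq.symm
    _ = J ∘ (rOnLastTwo r ∘ rOnFirstTwo r ∘ rOnLastTwo r) := by rw [hr]
    _ = (rOnLastTwo s ∘ rOnFirstTwo s ∘ rOnLastTwo s) ∘ J :=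
        (h₂.comp_right (h₁.comp_right h₂)).comp_eq

theorem bijective_iff_forall_bijective_of_eq_swap_mk {α β : Type*} (s : α × β → β × α)
    (f : β → α → α) (hs : ∀ x y, s (x, y) = (y, f y x)) :
    Bijective s ↔ ∀ y, Bijective (f y) := by
  refine ⟨fun h y => ⟨fun a b hab => ?_, fun c => ?_⟩, fun h => ⟨?_, ?_⟩⟩
  · simpa using h.1 (show s (a, y) = s (b, y) by rw [hs, hs, hab])
  · obtain ⟨⟨a, b⟩, hab⟩ := h.2 (y, c)
    rw [hs, Prod.mk.injEq] at hab
    exact ⟨a, hab.1 ▸ hab.2⟩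
  · rintro ⟨x₁, y₁⟩ ⟨x₂, y₂⟩ hxy
    rw [hs, hs, Prod.mk.injEq] at hxy
    obtain ⟨rfl, hx⟩ := hxy
    rw [(h y₁).1 hx]
  · rintro ⟨y, c⟩
    obtain ⟨x, hx⟩ := (h y).2 c
    exact ⟨(x, y), by rw [hs, hx]⟩

section Derived

variable {X : Type*} {lam : X → Equiv.Perm X} {rho : X → X → X}

theorem lam_lam_of_isYBSolution
    (hYB : IsYBSolution (fun p : X × X => (lam p.1 p.2, rho p.2 p.1))) (x y z : X) :
    lam (lam x y) (lam (rho y x) z) = lam x (lam y z) :=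
  congrArg Prod.fst (congrFun hYB (x, y, z))

theorem rho_lam_of_isYBSolution
    (hYB : IsYBSolution (fun p : X × X => (lam p.1 p.2, rho p.2 p.1))) (x y z : X) :
    rho (lam (rho y x) z) (lam x y) = lam (rho (lam y z) x) (rho z y) :=
  congrArg (Prod.fst ∘ Prod.snd) (congrFun hYB (x, y, z))

theorem sigmaMap_lam (x y : X) : sigmaMap lam rho (lam x y) x = lam (lam x y) (rho y x) := by
  simp [sigmaMap]

variable (lam) in
def lamShear₃ : X × X × X ≃ X × X × X :=
  Equiv.prodShear (Equiv.refl X) fun x => Equiv.prodShear (lam x) fun y => (lam y).trans (lam x)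

theorem lamShear₃_apply (x y z : X) : lamShear₃ lam (x, y, z) = (x, lam x y, lam x (lam y z)) :=
  rfl

theorem semiconj_lamShear₃_rOnFirstTwo
    (hYB : IsYBSolution (fun p : X × X => (lam p.1 p.2, rho p.2 p.1))) {s : X × X → X × X}
    (hs : ∀ x y, s (x, y) = (y, sigmaMap lam rho y x)) :
    Semiconj (lamShear₃ lam) (rOnFirstTwo fun p : X × X => (lam p.1 p.2, rho p.2 p.1))
      (rOnFirstTwo s) := by
  rintro ⟨x, y, z⟩
  simp only [rOnFirstTwo, lamShear₃_apply, hs, sigmaMap_lam, lam_lam_of_isYBSolution hYB]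

theorem semiconj_lamShear₃_rOnLastTwo
    (hYB : IsYBSolution (fun p : X × X => (lam p.1 p.2, rho p.2 p.1))) {s : X × X → X × X}
    (hs : ∀ x y, s (x, y) = (y, sigmaMap lam rho y x)) :
    Semiconj (lamShear₃ lam) (rOnLastTwo fun p : X × X => (lam p.1 p.2, rho p.2 p.1))
      (rOnLastTwo s) := by
  rintro ⟨x, y, z⟩
  have hInv : (lam (lam x y)).symm (lam x (lam y z)) = lam (rho y x) z := by
    rw [Equiv.symm_apply_eq, lam_lam_of_isYBSolution hYB]
  simp only [rOnLastTwo, lamShear₃_apply, hs, sigmaMap, hInv, rho_lam_of_isYBSolution hYB,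
    lam_lam_of_isYBSolution hYB]

theorem eq_prodShear_comp_comp_symm {s : X × X → X × X}
    (hs : ∀ x y, s (x, y) = (y, sigmaMap lam rho y x)) :
    s = Equiv.prodShear (Equiv.refl X) lam ∘ (fun p : X × X => (lam p.1 p.2, rho p.2 p.1)) ∘
      (Equiv.prodShear (Equiv.refl X) lam).symm := by
  funext ⟨x, y⟩
  simp [hs, sigmaMap, Equiv.prodShear]

end Derived

theorem stmt3 {X : Type*} (lam : X → Equiv.Perm X) (rho : X → X → X)
    (hYB : IsYBSolution (fun p : X × X => (lam p.1 p.2, rho p.2 p.1)))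
    (s : X × X → X × X)
    (hs : ∀ x y : X, s (x, y) = (y, sigmaMap lam rho y x)) :
    IsYBSolution s ∧
    (∀ x : X, Function.Bijective fun y => (s (x, y)).1) ∧
    (Function.Bijective (fun p : X × X => (lam p.1 p.2, rho p.2 p.1)) ↔
      Function.Bijective s) ∧
    (Function.Bijective s ↔ ∀ y : X, Function.Bijective (sigmaMap lam rho y)) := by
  refine ⟨hYB.of_semiconj _ (lamShear₃ lam).surjective
      (semiconj_lamShear₃_rOnFirstTwo hYB hs) (semiconj_lamShear₃_rOnLastTwo hYB hs),
    fun x => ?_, ?_, bijective_iff_forall_bijective_of_eq_swap_mk s _ hs⟩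
  · simp only [hs]
    exact bijective_id
  · rw [eq_prodShear_comp_comp_symm hs, Equiv.comp_bijective, Equiv.bijective_comp]
end

section
/- For a left non-degenerate solution (X,r) of the Yang–Baxter equation, the maps σ_x (defined by σ_z(x) = λ_z(ρ_{λ_x^{-1}(z)}(x))) satisfy σ_x ∘ σ_y = σ_{σ_x(y)} ∘ σ_x for all x,y ∈ X. Hence, if (X,r) is moreover bijective, the operation x ◁ y = σ_y(x) makes (X,◁) a rack. -/
/-!
Writing `r(x, y) = (λ_x y, ρ_y x)`, every value of `σ` has the form `σ_{λ_w v}(w) = λ_{λ_w v}(ρ_v w)`,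
the first coordinate of `r²(w, v)`. Since the `λ_x` are bijective, every triple can be written
`(x, y, z) = (λ_z λ_b c, λ_z b, z)`; for it both sides of the self-distributivity law become
`λ_x λ_{λ_p q}(ρ_q p)` with `p = ρ_{λ_b c} z`, `q = ρ_c b`, by the three component equations of the
braid relation. The key intermediate fact is that each `λ_a` intertwines `σ_u` with `σ_{λ_a u}`.

For bijectivity, `σ_y = λ_y ∘ (x ↦ ρ_{λ_x⁻¹ y} x)`, and the second factor is `r` restricted to the
pairs `(x, u)` with `λ_x u = y`, which it maps bijectively onto `{y} × X`.
-/

section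

variable {X : Type*} {lam : X → Equiv.Perm X} {rho : X → X → X}

theorem sigmaMap_of_eq_lam {x w v : X} (h : x = lam w v) :
    sigmaMap lam rho x w = lam x (rho v w) := by
  subst h
  simp only [sigmaMap, Equiv.symm_apply_apply]

theorem sigmaMap_lam_self (w v : X) :
    sigmaMap lam rho (lam w v) w = lam (lam w v) (rho v w) :=
  sigmaMap_of_eq_lam rfl

theorem sigmaMap_lam_lam
    (hYB1 : ∀ x y z : X, lam x (lam y z) = lam (lam x y) (lam (rho y x) z))
    (hYB2 : ∀ x y z : X,
      lam (rho (lam y z) x) (rho z y) = rho (lam (rho y x) z) (lam x y))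
    (a u v : X) :
    sigmaMap lam rho (lam a u) (lam a v) = lam a (sigmaMap lam rho u v) := by
  obtain ⟨c, rfl⟩ : ∃ c, u = lam v c := ⟨(lam v).symm u, by simp⟩
  rw [sigmaMap_of_eq_lam (hYB1 a v c), ← hYB2 a v c, ← hYB1, sigmaMap_lam_self]

theorem sigmaMap_self_distrib
    (hYB1 : ∀ x y z : X, lam x (lam y z) = lam (lam x y) (lam (rho y x) z))
    (hYB2 : ∀ x y z : X,
      lam (rho (lam y z) x) (rho z y) = rho (lam (rho y x) z) (lam x y))
    (hYB3 : ∀ x y z : X, rho z (rho y x) = rho (rho z y) (rho (lam y z) x))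
    (x y z : X) :
    sigmaMap lam rho x (sigmaMap lam rho y z) =
      sigmaMap lam rho (sigmaMap lam rho x y) (sigmaMap lam rho x z) := by
  obtain ⟨b, rfl⟩ : ∃ b, y = lam z b := ⟨(lam z).symm y, by simp⟩
  obtain ⟨c, rfl⟩ : ∃ c, x = lam z (lam b c) := ⟨(lam b).symm ((lam z).symm x), by simp⟩
  set x := lam z (lam b c)
  set p := rho (lam b c) z
  set q := rho c b
  have hσxy : sigmaMap lam rho x (lam z b) = lam x (lam p q) := by
    rw [sigmaMap_lam_lam hYB1 hYB2, sigmaMap_lam_self, hYB1]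
  rw [sigmaMap_lam_self, hσxy, sigmaMap_lam_self, sigmaMap_lam_lam hYB1 hYB2, sigmaMap_lam_self,
    sigmaMap_of_eq_lam ((hYB1 z b c).trans (hYB1 _ _ c)), ← hYB2 (lam z b) (rho b z) c,
    ← hYB2 z b c, hYB3 z b c]

theorem bijective_rho_lam_symm
    (hr : Function.Bijective (fun p : X × X => (lam p.1 p.2, rho p.2 p.1))) (y : X) :
    Function.Bijective (fun x : X => rho ((lam x).symm y) x) := by
  have hfibre : ∀ x : X,
      (lam x ((lam x).symm y), rho ((lam x).symm y) x) = (y, rho ((lam x).symm y) x) := by simp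
  refine ⟨fun u v huv => ?_, fun t => ?_⟩
  · have := hr.injective (a₁ := (u, (lam u).symm y)) (a₂ := (v, (lam v).symm y))
      ((hfibre u).trans ((congrArg (Prod.mk y) huv).trans (hfibre v).symm))
    exact congrArg Prod.fst this
  · obtain ⟨⟨u, v⟩, huv⟩ := hr.surjective (y, t)
    obtain ⟨rfl, rfl⟩ := Prod.mk.inj huv
    exact ⟨u, by simp⟩

theorem sigmaMap_bijective_s4
    (hr : Function.Bijective (fun p : X × X => (lam p.1 p.2, rho p.2 p.1))) (y : X) :
    Function.Bijective (sigmaMap lam rho y) :=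
  (lam y).bijective.comp (bijective_rho_lam_symm hr y)

end

theorem stmt4 {X : Type*} (lam : X → Equiv.Perm X) (rho : X → X → X)
    (hYB1 : ∀ x y z : X, lam x (lam y z) = lam (lam x y) (lam (rho y x) z))
    (hYB2 : ∀ x y z : X,
      lam (rho (lam y z) x) (rho z y) = rho (lam (rho y x) z) (lam x y))
    (hYB3 : ∀ x y z : X, rho z (rho y x) = rho (rho z y) (rho (lam y z) x)) :
    (∀ x y z : X,
      sigmaMap lam rho x (sigmaMap lam rho y z) =
        sigmaMap lam rho (sigmaMap lam rho x y) (sigmaMap lam rho x z)) ∧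
    -- if moreover `r` is bijective, `x ◁ y = σ_y(x)` is a rack: the self-distributivity
    -- law is the identity above, and each right translation `x ↦ x ◁ y = σ_y(x)` is bijective
    (Function.Bijective (fun p : X × X => (lam p.1 p.2, rho p.2 p.1)) →
      ∀ y : X, Function.Bijective (sigmaMap lam rho y)) :=
  ⟨sigmaMap_self_distrib hYB1 hYB2 hYB3, fun hr => sigmaMap_bijective_s4 hr⟩
end

section
/- Let M and A be monoids, θ: M → Aut(A) an action, and φ: M → A a bijective 1-cocycle with respect to θ (i.e., φ is bijective, φ(1)=1, and φ(xy) = φ(x)·θ(x)(φ(y)) for all x,y ∈ M). If η is a congruence on M such that (1) η ⊆ Ker θ = {(x,y): θ(x)=θ(y)} and (2) φ(η) = {(θ(z)(φ(x)), θ(z)(φ(y))) : (x,y) ∈ η} for all z ∈ M, then φ(η) = {(φ(x),φ(y)) : (x,y) ∈ η} is a congruence on A. -/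
/-!
Transport `η` along the bijection `φ`: the image relation is an equivalence because `φ` is a
bijection. For multiplicativity, given `(φ x, φ y)` and `(c, d)` in `φ(η)`, the invariance of
`φ(η)` under `θ x` writes `(c, d) = (θ x (φ u), θ x (φ v))` with `u η v`; since `θ x = θ y`, the
cocycle identity gives `(φ x * c, φ y * d) = (φ (x * u), φ (y * v))`, and `x * u η y * v`.
-/

open Function

theorem Relation.map_iff_exists_eq {α β γ δ : Type*} {r : α → β → Prop} {f : α → γ}
    {g : β → δ} {c : γ} {d : δ} :
    Relation.Map r f g c d ↔ ∃ a b, r a b ∧ c = f a ∧ d = g b :=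
  exists_congr fun _ => exists_congr fun _ => and_congr_right' (and_congr eq_comm eq_comm)

section Cocycle

variable {M A : Type*} [Monoid M] [Monoid A] {θ : M →* MulAut A} {φ : M → A}

theorem Relation.map_mul_of_cocycle (hcoc : ∀ x y : M, φ (x * y) = φ x * θ x (φ y))
    {η : Con M} (hker : ∀ x y, η x y → θ x = θ y)
    (hinv : ∀ z, Relation.Map η φ φ ≤ Relation.Map η (θ z ∘ φ) (θ z ∘ φ))
    {a b c d : A} (hab : Relation.Map η φ φ a b) (hcd : Relation.Map η φ φ c d) :
    Relation.Map η φ φ (a * c) (b * d) := by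
  obtain ⟨x, y, hxy, rfl, rfl⟩ := hab
  obtain ⟨u, v, huv, rfl, rfl⟩ := hinv x c d hcd
  refine ⟨x * u, y * v, η.mul hxy huv, hcoc x u, ?_⟩
  rw [hcoc, hker x y hxy, comp_apply]

def Con.mapOfCocycle (hφ : Bijective φ) (hcoc : ∀ x y : M, φ (x * y) = φ x * θ x (φ y))
    (η : Con M) (hker : ∀ x y, η x y → θ x = θ y)
    (hinv : ∀ z, Relation.Map η φ φ ≤ Relation.Map η (θ z ∘ φ) (θ z ∘ φ)) : Con A where
  r := Relation.Map η φ φ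
  iseqv := Relation.map_equivalence η.iseqv φ hφ.2 fun x _ h => hφ.1 h ▸ η.refl x
  mul' := Relation.map_mul_of_cocycle hcoc hker hinv

end Cocycle

theorem stmt5_general {M A : Type*} [Monoid M] [Monoid A]
    (θ : M →* MulAut A) (φ : M → A)
    (hφbij : Function.Bijective φ)
    (hcoc : ∀ x y : M, φ (x * y) = φ x * θ x (φ y))
    (η : Con M)
    (hker : ∀ x y : M, η x y → θ x = θ y)
    (hinv : ∀ z a b, (∃ x y : M, η x y ∧ a = φ x ∧ b = φ y) ↔
      (∃ x y : M, η x y ∧ a = θ z (φ x) ∧ b = θ z (φ y))) :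
    ∃ c : Con A, ∀ a b : A, c a b ↔ ∃ x y : M, η x y ∧ a = φ x ∧ b = φ y := by
  have hinv' : ∀ z, Relation.Map η φ φ ≤ Relation.Map η (θ z ∘ φ) (θ z ∘ φ) := fun z a b h =>
    Relation.map_iff_exists_eq.2 ((hinv z a b).1 (Relation.map_iff_exists_eq.1 h))
  exact ⟨Con.mapOfCocycle hφbij hcoc η hker hinv', fun _ _ => Relation.map_iff_exists_eq⟩

theorem stmt5 {M A : Type*} [Monoid M] [Monoid A]
    (θ : M →* MulAut A) (φ : M → A)
    (hφbij : Function.Bijective φ) (hφ1 : φ 1 = 1)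
    (hcoc : ∀ x y : M, φ (x * y) = φ x * θ x (φ y))
    (η : Con M)
    (hker : ∀ x y : M, η x y → θ x = θ y)
    (hinv : ∀ z a b, (∃ x y : M, η x y ∧ a = φ x ∧ b = φ y) ↔
      (∃ x y : M, η x y ∧ a = θ z (φ x) ∧ b = θ z (φ y))) :
    ∃ c : Con A, ∀ a b : A, c a b ↔ ∃ x y : M, η x y ∧ a = φ x ∧ b = φ y :=
  stmt5_general θ φ hφbij hcoc η hker hinv
end

section
/- Let θ: M → Aut(A) be a monoid action and φ: M → A a bijective 1-cocycle with respect to θ. Set 𝒢 = θ(M) ⊆ Aut(A). Then the map f: M → A ⋊ 𝒢 defined by f(x) = (φ(x), θ(x)) is an injective monoid homomorphism, and its image equals {(a, ϕ(a)) : a ∈ A}, where ϕ = θ ∘ φ^{-1}: A → 𝒢 satisfies ϕ(a)ϕ(b) = ϕ(a·ϕ(a)(b)) for all a,b ∈ A. -/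
/-- The semidirect product `A ⋊ Aut(A)` of a monoid `A` with its automorphism group,
with multiplication `(a, g)(b, h) = (a · g(b), g h)`.  A submonoid `𝒢 = θ(M)` of
`Aut(A)` yields the semidirect product `A ⋊ 𝒢` inside it. -/
structure MonoidSDP (A : Type*) [Monoid A] where
  fst : A
  snd : MulAut A

namespace MonoidSDP

variable {A : Type*} [Monoid A]

instance : Monoid (MonoidSDP A) where
  mul p q := ⟨p.fst * p.snd q.fst, p.snd * q.snd⟩
  one := ⟨1, 1⟩
  mul_assoc := by
    rintro ⟨a, g⟩ ⟨b, h⟩ ⟨c, k⟩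
    refine congrArg₂ MonoidSDP.mk ?_ (mul_assoc g h k)
    show (a * g b) * (g * h) c = a * g (b * h c)
    simp [MulAut.mul_apply, map_mul, mul_assoc]
  one_mul := by
    rintro ⟨a, g⟩
    refine congrArg₂ MonoidSDP.mk ?_ (one_mul g)
    show 1 * (1 : MulAut A) a = a
    simp
  mul_one := by
    rintro ⟨a, g⟩
    refine congrArg₂ MonoidSDP.mk ?_ (mul_one g)
    show a * g 1 = a
    simp

theorem mul_def (p q : MonoidSDP A) :
    p * q = ⟨p.fst * p.snd q.fst, p.snd * q.snd⟩ := rfl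

theorem one_def : (1 : MonoidSDP A) = ⟨1, 1⟩ := rfl

end MonoidSDP

section Cocycle

variable {M A : Type*} [Monoid M] [Monoid A] (θ : M →* MulAut A) {φ : M → A}

/-- `φ 1 · φ x = φ (1 * x) = φ x`, and by surjectivity some `φ x` equals `1`. -/
theorem cocycle_map_one_of_surjective (hφ : Function.Surjective φ)
    (hcoc : ∀ x y : M, φ (x * y) = φ x * θ x (φ y)) : φ 1 = 1 := by
  obtain ⟨x, hx⟩ := hφ 1
  calc φ 1 = φ 1 * θ 1 (φ x) := by rw [map_one, MulAut.one_apply, hx, mul_one]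
    _ = 1 := by rw [← hcoc, one_mul, hx]

def cocycleHom (h1 : φ 1 = 1) (hcoc : ∀ x y : M, φ (x * y) = φ x * θ x (φ y)) :
    M →* MonoidSDP A where
  toFun x := ⟨φ x, θ x⟩
  map_one' := by rw [h1, map_one]; rfl
  map_mul' x y := by rw [hcoc, map_mul]; rfl

variable (h1 : φ 1 = 1) (hcoc : ∀ x y : M, φ (x * y) = φ x * θ x (φ y))

theorem cocycleHom_apply (x : M) : cocycleHom θ h1 hcoc x = ⟨φ x, θ x⟩ := rfl

theorem cocycleHom_injective (hφ : Function.Injective φ) :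
    Function.Injective (cocycleHom θ h1 hcoc) :=
  fun _ _ h => hφ (congrArg MonoidSDP.fst h)

end Cocycle

section BijectiveCocycle

variable {M A : Type*} [Monoid M] [Monoid A] (θ : M →* MulAut A) (e : M ≃ A)

theorem range_cocycleHom (h1 : e 1 = 1) (hcoc : ∀ x y : M, e (x * y) = e x * θ x (e y)) :
    Set.range (cocycleHom θ h1 hcoc) = {p | ∃ a : A, p = ⟨a, θ (e.symm a)⟩} := by
  ext p
  constructor
  · rintro ⟨x, rfl⟩
    exact ⟨e x, by rw [cocycleHom_apply, e.symm_apply_apply]⟩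
  · rintro ⟨a, rfl⟩
    exact ⟨e.symm a, by rw [cocycleHom_apply, e.apply_symm_apply]⟩

/-- The cocycle identity `φ (x y) = φ x · θ x (φ y)`, read through `a = φ x`, `b = φ y`. -/
theorem cocycle_symm_mul (hcoc : ∀ x y : M, e (x * y) = e x * θ x (e y)) (a b : A) :
    θ (e.symm a) * θ (e.symm b) = θ (e.symm (a * θ (e.symm a) b)) := by
  obtain ⟨x, rfl⟩ := e.surjective a
  obtain ⟨y, rfl⟩ := e.surjective b
  rw [e.symm_apply_apply, e.symm_apply_apply, ← hcoc, e.symm_apply_apply, map_mul]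

end BijectiveCocycle

theorem stmt6_general {M A : Type*} [Monoid M] [Monoid A]
    (θ : M →* MulAut A) (φ : M → A)
    (hφbij : Function.Bijective φ)
    (hcoc : ∀ x y : M, φ (x * y) = φ x * θ x (φ y)) :
    ∃ (f : M →* MonoidSDP A) (ϕ : A → MulAut A),
      (∀ x : M, f x = ⟨φ x, θ x⟩) ∧
      Function.Injective f ∧
      (∀ x : M, ϕ (φ x) = θ x) ∧
      (Set.range f = {p : MonoidSDP A | ∃ a : A, p = ⟨a, ϕ a⟩}) ∧
      (∀ a b : A, ϕ a * ϕ b = ϕ (a * ϕ a b)) := by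
  let e := Equiv.ofBijective φ hφbij
  have h1 : φ 1 = 1 := cocycle_map_one_of_surjective θ hφbij.2 hcoc
  exact ⟨cocycleHom θ h1 hcoc, fun a => θ (e.symm a), cocycleHom_apply θ h1 hcoc,
    cocycleHom_injective θ h1 hcoc hφbij.1, fun x => congrArg θ (e.symm_apply_apply x),
    range_cocycleHom θ e h1 hcoc, cocycle_symm_mul θ e hcoc⟩

theorem stmt6 {M A : Type*} [Monoid M] [Monoid A]
    (θ : M →* MulAut A) (φ : M → A)
    (hφbij : Function.Bijective φ) (hφ1 : φ 1 = 1)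
    (hcoc : ∀ x y : M, φ (x * y) = φ x * θ x (φ y)) :
    ∃ (f : M →* MonoidSDP A) (ϕ : A → MulAut A),
      (∀ x : M, f x = ⟨φ x, θ x⟩) ∧
      Function.Injective f ∧
      (∀ x : M, ϕ (φ x) = θ x) ∧
      (Set.range f = {p : MonoidSDP A | ∃ a : A, p = ⟨a, ϕ a⟩}) ∧
      (∀ a b : A, ϕ a * ϕ b = ϕ (a * ϕ a b)) :=
  stmt6_general θ φ hφbij hcoc
end

section
/- If (X,r) is a bijective left non-degenerate solution of the Yang–Baxter equation, then every element of the derived structure monoid A = A(X,r) is normal, i.e., aA = Aa for all a ∈ A. Consequently, if X = {x_1,…,x_n} is finite, every element of A can be written in the form x_1^{k_1} ⋯ x_n^{k_n} with k_1,…,k_n ≥ 0. -/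
/-- Defining relations of the derived structure monoid `A(X,r) = ⟨X | xz = z·σ_z(x)⟩`. -/
def derivedRel {X : Type*} (lam : X → Equiv.Perm X) (rho : X → X → X) :
    FreeMonoid X → FreeMonoid X → Prop := fun a b =>
  ∃ x z : X, a = FreeMonoid.of x * FreeMonoid.of z ∧
    b = FreeMonoid.of z * FreeMonoid.of (sigmaMap lam rho z x)

/-- The derived structure monoid `A(X,r)`. -/
abbrev DerivedMonoid {X : Type*} (lam : X → Equiv.Perm X) (rho : X → X → X) :=
  (conGen (derivedRel lam rho)).Quotient

/-- The canonical image of a generator `x ∈ X` in `A(X,r)`. -/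
def ofA {X : Type*} (lam : X → Equiv.Perm X) (rho : X → X → X) (x : X) :
    DerivedMonoid lam rho := (conGen (derivedRel lam rho)).mk' (FreeMonoid.of x)

/-! ### Auxiliary definitions and lemmas -/

section Aux
variable {X : Type*} (lam : X → Equiv.Perm X) (rho : X → X → X)

/-- image of a word in the derived monoid -/
def mkW (l : List X) : DerivedMonoid lam rho :=
  (conGen (derivedRel lam rho)).mk' (FreeMonoid.ofList l)

lemma mkW_nil : mkW lam rho [] = 1 := rfl

lemma mkW_cons (a : X) (l : List X) : mkW lam rho (a :: l) = ofA lam rho a * mkW lam rho l := by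
  unfold mkW ofA
  rw [← map_mul]
  rfl

lemma mkW_append (l₁ l₂ : List X) :
    mkW lam rho (l₁ ++ l₂) = mkW lam rho l₁ * mkW lam rho l₂ := by
  unfold mkW
  rw [← map_mul]
  rfl

lemma exists_mkW (a : DerivedMonoid lam rho) : ∃ l : List X, a = mkW lam rho l := by
  obtain ⟨w, hw⟩ := Con.mk'_surjective (c := conGen (derivedRel lam rho)) a
  exact ⟨FreeMonoid.toList w, by simp [mkW, hw.symm]⟩

lemma ofA_comm (x z : X) :
    ofA lam rho x * ofA lam rho z
      = ofA lam rho z * ofA lam rho (sigmaMap lam rho z x) := by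
  unfold ofA
  rw [← map_mul, ← map_mul]
  exact (Con.eq _).mpr (ConGen.Rel.of _ _ ⟨x, z, rfl, rfl⟩)

lemma sigma_bij [Finite X]
    (hbij : Function.Bijective (fun p : X × X => (lam p.1 p.2, rho p.2 p.1))) (z : X) :
    Function.Bijective (sigmaMap lam rho z) := by
  rw [← Finite.injective_iff_bijective]
  intro x x' h
  have h2 : rho ((lam x).symm z) x = rho ((lam x').symm z) x' := (lam z).injective h
  have h3 : (fun p : X × X => (lam p.1 p.2, rho p.2 p.1)) (x, (lam x).symm z)
      = (fun p : X × X => (lam p.1 p.2, rho p.2 p.1)) (x', (lam x').symm z) := by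
    simp only [Prod.mk.injEq]
    exact ⟨by simp, h2⟩
  exact congrArg Prod.fst (hbij.1 h3)

/-- A word letter can hop left over a generator (the generator passes unchanged,
the word mutates pointwise). -/
lemma move_left (z : X) (l : List X) :
    mkW lam rho l * ofA lam rho z
      = ofA lam rho z * mkW lam rho (l.map (sigmaMap lam rho z)) := by
  induction l with
  | nil => simp [mkW_nil]
  | cons x t ih =>
      rw [List.map_cons, mkW_cons, mkW_cons, mul_assoc, ih, ← mul_assoc,
        ofA_comm, mul_assoc]

lemma gen_left (z : X) (b : DerivedMonoid lam rho) :
    ∃ b', b * ofA lam rho z = ofA lam rho z * b' := by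
  obtain ⟨l, rfl⟩ := exists_mkW lam rho b
  exact ⟨_, move_left lam rho z l⟩

lemma gen_right [Finite X]
    (hbij : Function.Bijective (fun p : X × X => (lam p.1 p.2, rho p.2 p.1)))
    (z : X) (b : DerivedMonoid lam rho) :
    ∃ b', ofA lam rho z * b = b' * ofA lam rho z := by
  obtain ⟨l, rfl⟩ := exists_mkW lam rho b
  have hs := (sigma_bij lam rho hbij z).2
  refine ⟨mkW lam rho (l.map (Function.surjInv hs)), ?_⟩
  rw [move_left, List.map_map]
  congr 1
  apply congrArg
  have : sigmaMap lam rho z ∘ Function.surjInv hs = id := by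
    funext y
    exact Function.surjInv_eq hs y
  rw [this, List.map_id]

/-- move an arbitrary element `a` from right to left of `b`. -/
lemma move_all_left (l : List X) (b : DerivedMonoid lam rho) :
    ∃ b', b * mkW lam rho l = mkW lam rho l * b' := by
  induction l generalizing b with
  | nil => exact ⟨b, by simp [mkW_nil]⟩
  | cons x t ih =>
      obtain ⟨b1, h1⟩ := gen_left lam rho x b
      obtain ⟨b2, h2⟩ := ih b1
      exact ⟨b2, by rw [mkW_cons, ← mul_assoc, h1, mul_assoc, h2, ← mul_assoc]⟩

lemma move_all_right [Finite X]
    (hbij : Function.Bijective (fun p : X × X => (lam p.1 p.2, rho p.2 p.1)))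
    (l : List X) (b : DerivedMonoid lam rho) :
    ∃ b', mkW lam rho l * b = b' * mkW lam rho l := by
  induction l generalizing b with
  | nil => exact ⟨b, by simp [mkW_nil]⟩
  | cons x t ih =>
      obtain ⟨b1, h1⟩ := ih b
      obtain ⟨b2, h2⟩ := gen_right lam rho hbij x b1
      exact ⟨b2, by rw [mkW_cons, mul_assoc, h1, ← mul_assoc, h2, mul_assoc]⟩

end Aux

/-! ### The positional measure used for the normal-form induction -/

def muL {X : Type*} (B : ℕ) (key : X → ℕ) : List X → ℕ
  | [] => 0
  | a :: t => key a * B ^ t.length + muL B key t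

lemma muL_lt {X : Type*} {B : ℕ} {key : X → ℕ} (hkey : ∀ x, key x < B) :
    ∀ l : List X, muL B key l < B ^ l.length := by
  intro l
  induction l with
  | nil => simp [muL]
  | cons a t ih =>
      have h1 : key a * B ^ t.length + muL B key t < (key a + 1) * B ^ t.length := by
        rw [add_mul, one_mul]
        omega
      have h2 : (key a + 1) * B ^ t.length ≤ B * B ^ t.length :=
        Nat.mul_le_mul_right _ (hkey a)
      calc muL B key (a :: t) = key a * B ^ t.length + muL B key t := rfl
        _ < (key a + 1) * B ^ t.length := h1
        _ ≤ B * B ^ t.length := h2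
        _ = B ^ (a :: t).length := by rw [List.length_cons, pow_succ, mul_comm]

lemma muL_append_lt {X : Type*} {B : ℕ} {key : X → ℕ} :
    ∀ (u : List X) {t t' : List X}, t'.length = t.length →
      muL B key t' < muL B key t → muL B key (u ++ t') < muL B key (u ++ t) := by
  intro u
  induction u with
  | nil => intro t t' _ h; simpa using h
  | cons a u ih =>
      intro t t' hlen h
      have hlen2 : (u ++ t').length = (u ++ t).length := by simp [hlen]
      calc muL B key ((a :: u) ++ t')
          = key a * B ^ (u ++ t').length + muL B key (u ++ t') := rfl
        _ = key a * B ^ (u ++ t).length + muL B key (u ++ t') := by rw [hlen2]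
        _ < key a * B ^ (u ++ t).length + muL B key (u ++ t) :=
            Nat.add_lt_add_left (ih hlen h) _
        _ = muL B key ((a :: u) ++ t) := rfl

lemma muL_descent {X : Type*} {B : ℕ} {key : X → ℕ} (hkey : ∀ x, key x < B)
    {y z : X} (s : X) (v : List X) (h : key z < key y) :
    muL B key (z :: s :: v) < muL B key (y :: z :: v) := by
  have hsv : muL B key (s :: v) < B ^ (s :: v).length := muL_lt hkey (s :: v)
  have hlen : (s :: v).length = (z :: v).length := by simp
  calc muL B key (z :: s :: v)
      = key z * B ^ (s :: v).length + muL B key (s :: v) := rfl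
    _ < key z * B ^ (s :: v).length + B ^ (s :: v).length := by omega
    _ = (key z + 1) * B ^ (s :: v).length := by ring
    _ ≤ key y * B ^ (s :: v).length := Nat.mul_le_mul_right _ h
    _ = key y * B ^ (z :: v).length := by rw [hlen]
    _ ≤ key y * B ^ (z :: v).length + muL B key (z :: v) := Nat.le_add_right _ _
    _ = muL B key (y :: z :: v) := rfl

/-- Either a list is a chain (sorted) or it has an adjacent "descent". -/
lemma chain_or_split {α : Type*} (r : α → α → Prop) :
    ∀ l : List α, List.Chain' r l ∨ ∃ u y z v, l = u ++ y :: z :: v ∧ ¬ r y z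
  | [] => Or.inl (List.isChain_nil)
  | [a] => Or.inl (List.isChain_singleton a)
  | a :: b :: t => by
      by_cases h : r a b
      · rcases chain_or_split r (b :: t) with hc | ⟨u, y, z, v, heq, hn⟩
        · exact Or.inl (List.isChain_cons_cons.mpr ⟨h, hc⟩)
        · exact Or.inr ⟨a :: u, y, z, v, by rw [heq]; rfl, hn⟩
      · exact Or.inr ⟨[], a, b, t, rfl, h⟩

theorem stmt8 {X : Type*} [Fintype X] (lam : X → Equiv.Perm X) (rho : X → X → X)
    (hYB1 : ∀ x y z : X, lam x (lam y z) = lam (lam x y) (lam (rho y x) z))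
    (hYB2 : ∀ x y z : X,
      lam (rho (lam y z) x) (rho z y) = rho (lam (rho y x) z) (lam x y))
    (hYB3 : ∀ x y z : X, rho z (rho y x) = rho (rho z y) (rho (lam y z) x))
    (hbij : Function.Bijective (fun p : X × X => (lam p.1 p.2, rho p.2 p.1))) :
    -- every element of `A(X,r)` is normal: `aA = Aa`
    (∀ a : DerivedMonoid lam rho, {c : DerivedMonoid lam rho | ∃ b, c = a * b} = {c : DerivedMonoid lam rho | ∃ b, c = b * a}) ∧
    -- with `X = {x_1, …, x_n}`, every element of `A` is of the form `x_1^{k_1} ⋯ x_n^{k_n}`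
    (∀ (n : ℕ) (e : Fin n ≃ X) (a : DerivedMonoid lam rho), ∃ k : Fin n → ℕ,
      a = ((List.finRange n).map fun i => ofA lam rho (e i) ^ k i).prod) := by
  constructor
  · -- normality
    intro a
    ext c
    simp only [Set.mem_setOf_eq]
    obtain ⟨l, rfl⟩ := exists_mkW lam rho a
    constructor
    · rintro ⟨b, rfl⟩
      obtain ⟨b', hb'⟩ := move_all_right lam rho hbij l b
      exact ⟨b', hb'⟩
    · rintro ⟨b, rfl⟩
      obtain ⟨b', hb'⟩ := move_all_left lam rho l b
      exact ⟨b', hb'⟩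
  · -- normal forms
    intro n e a
    letI : DecidableEq X := Classical.decEq X
    set key : X → ℕ := fun x => ((e.symm x : Fin n) : ℕ) with hkeydef
    have hkey : ∀ x, key x < n + 1 := fun x => Nat.lt_succ_of_lt (Fin.is_lt _) |>.trans_le (le_refl _)
    set r : X → X → Prop := fun x y => key x ≤ key y with hrdef
    haveI : IsTrans X r := ⟨fun a b c hab hbc => le_trans hab hbc⟩
    haveI : IsAntisymm X r := ⟨fun a b hab hba => by
      have : key a = key b := le_antisymm hab hba
      have h2 : (e.symm a) = (e.symm b) := Fin.ext this
      have := congrArg e h2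
      simpa using this⟩
    -- the target word for exponents k
    set T : (Fin n → ℕ) → List X := fun k =>
      (List.finRange n).flatMap fun i => List.replicate (k i) (e i) with hTdef
    -- the product form equals mkW of the target word
    have prod_form : ∀ k : Fin n → ℕ,
        ((List.finRange n).map fun i => ofA lam rho (e i) ^ k i).prod = mkW lam rho (T k) := by
      intro k
      have pow_rep : ∀ (m : ℕ) (x : X), ofA lam rho x ^ m = mkW lam rho (List.replicate m x) := by
        intro m x
        induction m with
        | zero => simp [mkW_nil]
        | succ m ih => rw [List.replicate_succ, mkW_cons, ← ih, pow_succ']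
      have : ∀ L : List (Fin n),
          ((L.map fun i => ofA lam rho (e i) ^ k i)).prod
            = mkW lam rho (L.flatMap fun i => List.replicate (k i) (e i)) := by
        intro L
        induction L with
        | nil => simp [mkW_nil]
        | cons i L ih =>
            rw [List.map_cons, List.prod_cons, ih, List.flatMap_cons, mkW_append, pow_rep]
      exact this _
    -- T k is sorted
    have T_sorted : ∀ k, List.Pairwise r (T k) := by
      intro k
      rw [hTdef]
      rw [List.pairwise_flatMap]
      refine ⟨fun i _ => List.pairwise_replicate.mpr ?_, ?_⟩
      · exact Or.inr (le_refl _)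
      · refine List.Pairwise.imp_of_mem ?_ (List.pairwise_lt_finRange n)
        intro i j hi hj hij
        intro x hx y hy
        have hx' : x = e i := List.eq_of_mem_replicate hx
        have hy' : y = e j := List.eq_of_mem_replicate hy
        subst hx'; subst hy'
        show key (e i) ≤ key (e j)
        simp only [hkeydef, Equiv.symm_apply_apply]
        exact le_of_lt hij
    -- count of x in T k
    have T_count : ∀ (k) (x : X), (T k).count x = k (e.symm x) := by
      intro k x
      rw [hTdef]
      simp only
      rw [List.count_flatMap]
      have : ∀ i : Fin n, (List.count x ∘ fun i => List.replicate (k i) (e i)) i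
          = if i = e.symm x then k i else 0 := by
        intro i
        simp only [Function.comp_apply, List.count_replicate]
        by_cases h : i = e.symm x
        · subst h; simp
        · have : ¬ (e i == x) = true := by
            simp only [beq_iff_eq]
            intro hc
            exact h (by rw [← hc]; simp)
          simp [this, h]
      rw [List.map_congr_left (fun i _ => this i)]
      rw [← Fin.sum_univ_def]
      simp
    -- main normal form claim by strong induction on the measure
    have main : ∀ (m : ℕ) (l : List X), muL (n + 1) key l < m →
        ∃ k : Fin n → ℕ, mkW lam rho l = mkW lam rho (T k) := by
      intro m
      induction m with
      | zero => intro l h; exact absurd h (Nat.not_lt_zero _)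
      | succ m ih =>
          intro l hl
          rcases chain_or_split r l with hc | ⟨u, y, z, v, heq, hn⟩
          · -- sorted: l is literally T k for k = counts
            refine ⟨fun i => l.count (e i), ?_⟩
            have hperm : List.Perm l (T (fun i => l.count (e i))) := by
              rw [List.perm_iff_count]
              intro x
              rw [T_count]
              simp
            have hsort₁ : List.Pairwise r l := List.isChain_iff_pairwise.mp hc
            have hsort₂ : List.Pairwise r (T fun i => l.count (e i)) := T_sorted _
            exact congrArg (mkW lam rho) (List.Perm.eq_of_pairwise (fun _ _ _ _ h1 h2 => antisymm h1 h2) hsort₁ hsort₂ hperm)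
          · -- descent: rewrite and decrease the measure
            subst heq
            have hzy : key z < key y := by
              simp only [hrdef, not_le] at hn
              exact hn
            have hrw : mkW lam rho (u ++ y :: z :: v)
                = mkW lam rho (u ++ z :: sigmaMap lam rho z y :: v) := by
              rw [mkW_append, mkW_append]
              congr 1
              rw [mkW_cons, mkW_cons, mkW_cons, mkW_cons, ← mul_assoc, ← mul_assoc,
                ofA_comm]
            have hdec : muL (n + 1) key (u ++ z :: sigmaMap lam rho z y :: v)
                < muL (n + 1) key (u ++ y :: z :: v) :=
              muL_append_lt u (by simp) (muL_descent hkey _ v hzy)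
            obtain ⟨k, hk⟩ := ih (u ++ z :: sigmaMap lam rho z y :: v) (by omega)
            exact ⟨k, by rw [hrw, hk]⟩
    obtain ⟨l, rfl⟩ := exists_mkW lam rho a
    obtain ⟨k, hk⟩ := main (muL (n + 1) key l + 1) l (Nat.lt_succ_self _)
    exact ⟨k, by rw [hk, prod_form]⟩
end

section
/- Let (X,r) be a finite bijective left non-degenerate solution of the Yang–Baxter equation and A = A(X,r). Then there exists d ≥ 1 (any d with σ_a^d = id for all a, e.g., a divisor of |X|!) such that a^d is central in A for every a ∈ A. -/
theorem stmt9 {X : Type*} [Fintype X] (lam : X → Equiv.Perm X) (rho : X → X → X)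
    (hYB1 : ∀ x y z : X, lam x (lam y z) = lam (lam x y) (lam (rho y x) z))
    (hYB2 : ∀ x y z : X,
      lam (rho (lam y z) x) (rho z y) = rho (lam (rho y x) z) (lam x y))
    (hYB3 : ∀ x y z : X, rho z (rho y x) = rho (rho z y) (rho (lam y z) x))
    (hbij : Function.Bijective (fun p : X × X => (lam p.1 p.2, rho p.2 p.1))) :
    ∃ d : ℕ, 1 ≤ d ∧
      ∀ a b : DerivedMonoid lam rho, b * a ^ d = a ^ d * b := by
  classical
  set C := conGen (derivedRel lam rho) with hC
  -- each σ_z is injective, hence bijective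
  have hinj : ∀ z : X, Function.Injective (sigmaMap lam rho z) := by
    intro z x x' h
    have h2 : rho ((lam x).symm z) x = rho ((lam x').symm z) x' :=
      (lam z).injective h
    have hp : (fun p : X × X => (lam p.1 p.2, rho p.2 p.1)) (x, (lam x).symm z)
        = (fun p : X × X => (lam p.1 p.2, rho p.2 p.1)) (x', (lam x').symm z) := by
      simp [h2]
    exact congrArg Prod.fst (hbij.1 hp)
  have hbijz : ∀ z : X, Function.Bijective (sigmaMap lam rho z) := fun z =>
    Finite.injective_iff_bijective.mp (hinj z)
  let Sg : X → Equiv.Perm X := fun z => Equiv.ofBijective _ (hbijz z)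
  have hSg : ∀ z : X, ⇑(Sg z) = sigmaMap lam rho z := fun z => rfl
  -- the basic relation
  have mapcomp : ∀ (f g : X → X) (c : FreeMonoid X),
      FreeMonoid.map (g ∘ f) c = FreeMonoid.map g (FreeMonoid.map f c) := by
    intro f g c
    rw [FreeMonoid.map_comp]
    rfl
  have rel : ∀ x z : X, (C.mk' (FreeMonoid.of x * FreeMonoid.of z) : C.Quotient)
      = C.mk' (FreeMonoid.of z * FreeMonoid.of (sigmaMap lam rho z x)) := by
    intro x z
    exact Con.eq _ |>.mpr (ConGen.Rel.of _ _ ⟨x, z, rfl, rfl⟩)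
  -- moving a word past a generator
  have key : ∀ (z : X) (b : FreeMonoid X),
      C.mk' b * C.mk' (FreeMonoid.of z)
        = C.mk' (FreeMonoid.of z) * C.mk' (FreeMonoid.map (sigmaMap lam rho z) b) := by
    intro z b
    induction b using FreeMonoid.inductionOn' with
    | one => simp
    | of_mul x b ih =>
        rw [map_mul, map_mul, mul_assoc, ih, ← mul_assoc, ← map_mul, rel x z, map_mul,
          map_mul, FreeMonoid.map_of, mul_assoc]
  -- moving a word past a word
  have key2 : ∀ a : FreeMonoid X, ∃ π : Equiv.Perm X, ∀ b : FreeMonoid X,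
      C.mk' b * C.mk' a = C.mk' a * C.mk' (FreeMonoid.map (⇑π) b) := by
    intro a
    induction a using FreeMonoid.inductionOn' with
    | one =>
        refine ⟨1, fun b => ?_⟩
        simp [FreeMonoid.map]
    | of_mul z a ih =>
        obtain ⟨π, hπ⟩ := ih
        refine ⟨π * Sg z, fun b => ?_⟩
        have : FreeMonoid.map (⇑(π * Sg z)) b
            = FreeMonoid.map (⇑π) (FreeMonoid.map (sigmaMap lam rho z) b) := by
          rw [← hSg z, ← mapcomp]
          rfl
        rw [this, map_mul, ← mul_assoc, key z b, mul_assoc, hπ, ← mul_assoc]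
  refine ⟨Fintype.card (Equiv.Perm X), Fintype.card_pos, ?_⟩
  intro a b
  obtain ⟨a', rfl⟩ := Con.mk'_surjective a
  obtain ⟨b', rfl⟩ := Con.mk'_surjective b
  obtain ⟨π, hπ⟩ := key2 a'
  have pow : ∀ (n : ℕ) (c : FreeMonoid X), C.mk' c * (C.mk' a') ^ n
      = (C.mk' a') ^ n * C.mk' (FreeMonoid.map (⇑(π ^ n)) c) := by
    intro n
    induction n with
    | zero => intro c; simp [FreeMonoid.map]
    | succ n ihn =>
        intro c
        have hmap : FreeMonoid.map (⇑(π ^ (n + 1))) c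
            = FreeMonoid.map (⇑(π ^ n)) (FreeMonoid.map (⇑π) c) := by
          rw [pow_succ]
          rw [Equiv.Perm.coe_mul, mapcomp]
        rw [pow_succ', ← mul_assoc, hπ c, mul_assoc, ihn, ← mul_assoc, ← pow_succ', hmap]
  have := pow (Fintype.card (Equiv.Perm X)) b'
  rwa [pow_card_eq_one, Equiv.Perm.coe_one, show FreeMonoid.map (id : X → X) b' = b' from
    congrFun (congrArg _ (FreeMonoid.map_id)) b'] at this
end

section
/- Let (X,r) be a finite bijective left non-degenerate solution of the Yang–Baxter equation and A = A(X,r). Then A is central-by-finite: there is a central submonoid C = ⟨x^d : x ∈ X⟩ of A (for suitable d ≥ 1) and a finite subset F ⊆ A with A = ⋃_{f ∈ F} Cf. Consequently, for any field K, the monoid algebra K[A] is a finite module over the central affine subalgebra K[C], hence is a Noetherian PI-algebra. -/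
namespace Stmt10Aux

variable {X : Type*} (lam : X → Equiv.Perm X) (rho : X → X → X)

/-- Image of a list of generators in the derived monoid. -/
def mkl (l : List X) : DerivedMonoid lam rho :=
  (conGen (derivedRel lam rho)).mk' (FreeMonoid.ofList l)

lemma mkl_nil : mkl lam rho [] = 1 := by
  unfold mkl
  rw [FreeMonoid.ofList_nil, map_one]

lemma mkl_append (l₁ l₂ : List X) :
    mkl lam rho (l₁ ++ l₂) = mkl lam rho l₁ * mkl lam rho l₂ := by
  unfold mkl
  rw [FreeMonoid.ofList_append, map_mul]

lemma mkl_cons (x : X) (l : List X) :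
    mkl lam rho (x :: l) = ofA lam rho x * mkl lam rho l := by
  unfold mkl
  rw [FreeMonoid.ofList_cons, map_mul]
  rfl

lemma mkl_singleton (x : X) : mkl lam rho [x] = ofA lam rho x := rfl

/-- The defining relation in the quotient monoid. -/
lemma rel (x z : X) :
    ofA lam rho x * ofA lam rho z
      = ofA lam rho z * ofA lam rho (sigmaMap lam rho z x) := by
  show (conGen (derivedRel lam rho)).mk' (FreeMonoid.of x)
      * (conGen (derivedRel lam rho)).mk' (FreeMonoid.of z)
      = (conGen (derivedRel lam rho)).mk' (FreeMonoid.of z)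
      * (conGen (derivedRel lam rho)).mk' (FreeMonoid.of (sigmaMap lam rho z x))
  rw [← map_mul, ← map_mul]
  exact (Con.eq _).2 (ConGen.Rel.of _ _ ⟨x, z, rfl, rfl⟩)

section Bij

variable [Finite X]

lemma sigma_bij (hbij : Function.Bijective (fun p : X × X => (lam p.1 p.2, rho p.2 p.1))) (z : X) : Function.Bijective (sigmaMap lam rho z) := by
  rw [← Finite.injective_iff_bijective]
  intro x₁ x₂ h
  have h2 : rho ((lam x₁).symm z) x₁ = rho ((lam x₂).symm z) x₂ := (lam z).injective h
  have h3 : (fun p : X × X => (lam p.1 p.2, rho p.2 p.1)) (x₁, (lam x₁).symm z)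
      = (fun p : X × X => (lam p.1 p.2, rho p.2 p.1)) (x₂, (lam x₂).symm z) := by
    simp only [Equiv.apply_symm_apply]
    rw [h2]
  have := hbij.injective h3
  exact congrArg Prod.fst this

/-- `σ_z` as a permutation of `X`. -/
noncomputable def sigP (hbij : Function.Bijective (fun p : X × X => (lam p.1 p.2, rho p.2 p.1))) (z : X) : Equiv.Perm X :=
  Equiv.ofBijective _ (sigma_bij lam rho hbij z)

lemma sigP_apply (hbij : Function.Bijective (fun p : X × X => (lam p.1 p.2, rho p.2 p.1))) (z x : X) : sigP lam rho hbij z x = sigmaMap lam rho z x := rfl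

lemma comm_pow (hbij : Function.Bijective (fun p : X × X => (lam p.1 p.2, rho p.2 p.1))) (x z : X) (n : ℕ) :
    ofA lam rho z * ofA lam rho x ^ n
      = ofA lam rho x ^ n * ofA lam rho ((sigP lam rho hbij x ^ n) z) := by
  induction n generalizing z with
  | zero => simp
  | succ n ih =>
    have key : (sigP lam rho hbij x ^ n) (sigmaMap lam rho x z)
        = (sigP lam rho hbij x ^ (n + 1)) z := by
      rw [pow_succ]; rfl
    rw [pow_succ', ← mul_assoc, rel lam rho z x, mul_assoc, ih (sigmaMap lam rho x z),
      ← mul_assoc, ← pow_succ', key]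

lemma comm_card (hbij : Function.Bijective (fun p : X × X => (lam p.1 p.2, rho p.2 p.1))) (x z : X) :
    ofA lam rho z * ofA lam rho x ^ (Nat.card (Equiv.Perm X))
      = ofA lam rho x ^ (Nat.card (Equiv.Perm X)) * ofA lam rho z := by
  have := comm_pow lam rho hbij x z (Nat.card (Equiv.Perm X))
  rwa [pow_card_eq_one', Equiv.Perm.coe_one, id_eq] at this

/-- `x ^ |Sym X|` is central. -/
lemma central (hbij : Function.Bijective (fun p : X × X => (lam p.1 p.2, rho p.2 p.1))) (x : X) (a : DerivedMonoid lam rho) :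
    a * ofA lam rho x ^ (Nat.card (Equiv.Perm X))
      = ofA lam rho x ^ (Nat.card (Equiv.Perm X)) * a := by
  obtain ⟨w, rfl⟩ := Con.mk'_surjective a
  induction w using FreeMonoid.inductionOn' with
  | one => rw [map_one, one_mul, mul_one]
  | of_mul y w ih =>
    rw [map_mul]
    calc (conGen (derivedRel lam rho)).mk' (FreeMonoid.of y)
          * (conGen (derivedRel lam rho)).mk' w * ofA lam rho x ^ Nat.card (Equiv.Perm X)
        = (conGen (derivedRel lam rho)).mk' (FreeMonoid.of y)
          * ((conGen (derivedRel lam rho)).mk' w * ofA lam rho x ^ Nat.card (Equiv.Perm X)) := by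
          rw [mul_assoc]
      _ = ofA lam rho y
          * (ofA lam rho x ^ Nat.card (Equiv.Perm X) * (conGen (derivedRel lam rho)).mk' w) := by
          rw [ih]; rfl
      _ = (ofA lam rho y * ofA lam rho x ^ Nat.card (Equiv.Perm X))
          * (conGen (derivedRel lam rho)).mk' w := by rw [mul_assoc]
      _ = (ofA lam rho x ^ Nat.card (Equiv.Perm X) * ofA lam rho y)
          * (conGen (derivedRel lam rho)).mk' w := by rw [comm_card lam rho hbij x y]
      _ = _ := by rw [mul_assoc]; rfl

end Bij

/-- Pulling a letter to the front of a word. -/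
lemma push (x : X) (u : List X) :
    mkl lam rho (u ++ [x]) = ofA lam rho x * mkl lam rho (u.map (sigmaMap lam rho x)) := by
  induction u with
  | nil => simp [mkl_singleton, mkl_nil]
  | cons a u ih =>
    rw [List.cons_append, mkl_cons, ih, List.map_cons, mkl_cons, ← mul_assoc,
      rel lam rho a x, mul_assoc]

lemma split_first {x : X} : ∀ {l : List X}, x ∈ l → ∃ s t, l = s ++ x :: t ∧ x ∉ s := by
  intro l
  induction l with
  | nil => intro h; cases h
  | cons a l ih =>
    intro h
    by_cases hax : a = x
    · exact ⟨[], l, by simp [hax], by simp⟩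
    · have hm : x ∈ l := by
        rcases List.mem_cons.1 h with h1 | h1
        · exact absurd h1.symm hax
        · exact h1
      obtain ⟨s, t, rfl, hns⟩ := ih hm
      exact ⟨a :: s, t, rfl, by
        intro hmem
        rcases List.mem_cons.1 hmem with h1 | h1
        · exact hax h1.symm
        · exact hns h1⟩

section Count

variable [DecidableEq X]

lemma extract_one (x : X) (l : List X) (h : x ∈ l) :
    ∃ l', mkl lam rho l = ofA lam rho x * mkl lam rho l'
      ∧ l'.length + 1 = l.length ∧ l.count x ≤ l'.count x + 1 := by
  obtain ⟨s, t, rfl, hns⟩ := split_first h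
  refine ⟨s.map (sigmaMap lam rho x) ++ t, ?_, ?_, ?_⟩
  · have : s ++ x :: t = (s ++ [x]) ++ t := by simp
    rw [this, mkl_append, push, mkl_append, mul_assoc]
  · simp
    omega
  · have hs0 : s.count x = 0 := List.count_eq_zero_of_not_mem hns
    simp [List.count_append, hs0]

lemma extract_pow (x : X) (n : ℕ) :
    ∀ l : List X, n ≤ l.count x →
    ∃ l', mkl lam rho l = ofA lam rho x ^ n * mkl lam rho l' ∧ l'.length + n = l.length := by
  induction n with
  | zero => intro l _; exact ⟨l, by simp, rfl⟩
  | succ n ih =>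
    intro l h
    have hx : x ∈ l := by
      rw [← List.count_pos_iff]
      omega
    obtain ⟨l', h1, h2, h3⟩ := extract_one lam rho x l hx
    obtain ⟨l'', h4, h5⟩ := ih l' (by omega)
    refine ⟨l'', ?_, by omega⟩
    rw [h1, h4, ← mul_assoc, ← pow_succ']

lemma length_bound [Fintype X] (d : ℕ) (l : List X) (h : ∀ x, l.count x < d) :
    l.length ≤ Fintype.card X * d := by
  have h1 : (l.toFinset.sum fun x => l.count x) = l.length := by
    have := Multiset.toFinset_sum_count_eq (l : Multiset X)
    simpa using this
  have h2 : (l.toFinset.sum fun x => l.count x)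
      ≤ (Finset.univ.sum fun x : X => l.count x) :=
    Finset.sum_le_sum_of_subset (Finset.subset_univ _)
  have h3 : (Finset.univ.sum fun x : X => l.count x) ≤ Fintype.card X * d := by
    calc (Finset.univ.sum fun x : X => l.count x)
        ≤ (Finset.univ.sum fun _ : X => d) :=
          Finset.sum_le_sum fun x _ => le_of_lt (h x)
      _ = Fintype.card X * d := by
          rw [Finset.sum_const, smul_eq_mul, Finset.card_univ]
  omega

lemma decompose (d : ℕ) (hd : 1 ≤ d) :
    ∀ n (l : List X), l.length ≤ n →
    ∃ c ∈ Submonoid.closure {b : DerivedMonoid lam rho | ∃ x : X, b = ofA lam rho x ^ d},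
      ∃ w : List X, (∀ x, w.count x < d) ∧ mkl lam rho l = c * mkl lam rho w := by
  intro n
  induction n with
  | zero =>
    intro l hl
    have : l = [] := List.eq_nil_of_length_eq_zero (Nat.le_zero.1 hl)
    subst this
    exact ⟨1, Submonoid.one_mem _, [], fun x => by simpa using (show 0 < d from hd), by rw [one_mul]⟩
  | succ n ih =>
    intro l hl
    by_cases hcase : ∀ x, l.count x < d
    · exact ⟨1, Submonoid.one_mem _, l, hcase, by rw [one_mul]⟩
    · push_neg at hcase
      obtain ⟨x, hx⟩ := hcase
      obtain ⟨l', h1, h2⟩ := extract_pow lam rho x d l hx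
      obtain ⟨c, hc, w, hw, h3⟩ := ih l' (by omega)
      refine ⟨ofA lam rho x ^ d * c, ?_, w, hw, ?_⟩
      · exact Submonoid.mul_mem _ (Submonoid.subset_closure ⟨x, rfl⟩) hc
      · rw [h1, h3, mul_assoc]

end Count

end Stmt10Aux

open Stmt10Aux in
theorem stmt10 {X : Type*} [Fintype X] (lam : X → Equiv.Perm X) (rho : X → X → X)
    (hYB1 : ∀ x y z : X, lam x (lam y z) = lam (lam x y) (lam (rho y x) z))
    (hYB2 : ∀ x y z : X,
      lam (rho (lam y z) x) (rho z y) = rho (lam (rho y x) z) (lam x y))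
    (hYB3 : ∀ x y z : X, rho z (rho y x) = rho (rho z y) (rho (lam y z) x))
    (hbij : Function.Bijective (fun p : X × X => (lam p.1 p.2, rho p.2 p.1))) :
    ∃ d : ℕ, 1 ≤ d ∧
      -- the submonoid `C = ⟨x^d : x ∈ X⟩` is central
      (∀ c ∈ Submonoid.closure {b : DerivedMonoid lam rho | ∃ x : X, b = ofA lam rho x ^ d},
        ∀ a : DerivedMonoid lam rho, a * c = c * a) ∧
      -- `A = ⋃_{f ∈ F} C f` for a finite set `F`
      (∃ F : Finset (DerivedMonoid lam rho), ∀ a : DerivedMonoid lam rho,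
        ∃ c ∈ Submonoid.closure {b : DerivedMonoid lam rho | ∃ x : X, b = ofA lam rho x ^ d},
          ∃ f ∈ F, a = c * f) ∧
      -- over any field `K`, the monoid algebra `K[A]` is a finite module over the central
      -- affine subalgebra `K[C]`, and is a Noetherian ring
      (∀ (K : Type) (_ : Field K),
        Module.Finite
          (Algebra.adjoin K
            ((MonoidAlgebra.of K (DerivedMonoid lam rho)) ''
              {b : DerivedMonoid lam rho | ∃ x : X, b = ofA lam rho x ^ d}))
          (MonoidAlgebra K (DerivedMonoid lam rho)) ∧
        IsNoetherianRing (MonoidAlgebra K (DerivedMonoid lam rho))) := by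
  classical
  set d := Nat.card (Equiv.Perm X) with hd_def
  have hd : 1 ≤ d := Nat.card_pos
  set S := {b : DerivedMonoid lam rho | ∃ x : X, b = ofA lam rho x ^ d} with hS_def
  -- centrality
  have hcent : ∀ c ∈ Submonoid.closure S, ∀ a : DerivedMonoid lam rho, a * c = c * a := by
    intro c hc
    induction hc using Submonoid.closure_induction with
    | mem b hb =>
      obtain ⟨x, rfl⟩ := hb
      intro a
      exact central lam rho hbij x a
    | one => intro a; rw [one_mul, mul_one]
    | mul c₁ c₂ _ _ h₁ h₂ =>
      intro a
      rw [← mul_assoc, h₁ a, mul_assoc, h₂ a, ← mul_assoc]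
  -- the finite set F
  have hFfin : ((fun l => mkl lam rho l) '' {l : List X | l.length ≤ Fintype.card X * d}).Finite :=
    Set.Finite.image _ (List.finite_length_le X (Fintype.card X * d))
  set F : Finset (DerivedMonoid lam rho) := hFfin.toFinset with hF_def
  have hdecomp : ∀ a : DerivedMonoid lam rho,
      ∃ c ∈ Submonoid.closure S, ∃ f ∈ F, a = c * f := by
    intro a
    obtain ⟨w, rfl⟩ := Con.mk'_surjective a
    have hw : (conGen (derivedRel lam rho)).mk' w = mkl lam rho (FreeMonoid.toList w) := rfl
    obtain ⟨c, hc, v, hv, h⟩ :=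
      decompose lam rho d hd (FreeMonoid.toList w).length (FreeMonoid.toList w) le_rfl
    refine ⟨c, hc, mkl lam rho v, ?_, by rw [hw, h]⟩
    rw [hF_def, Set.Finite.mem_toFinset]
    exact ⟨v, length_bound d v hv, rfl⟩
  refine ⟨d, hd, hcent, ⟨F, hdecomp⟩, ?_⟩
  -- the algebra part
  intro K _
  set of' := MonoidAlgebra.of K (DerivedMonoid lam rho) with hof_def
  have hSfin : S.Finite := by
    have : S ⊆ Set.range (fun x : X => ofA lam rho x ^ d) := by
      rintro b ⟨x, rfl⟩; exact ⟨x, rfl⟩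
    exact Set.Finite.subset (Set.finite_range _) this
  have hScomm : ∀ a ∈ of' '' S, ∀ b ∈ of' '' S, a * b = b * a := by
    rintro _ ⟨s, hs, rfl⟩ _ ⟨t, ht, rfl⟩
    rw [← map_mul, ← map_mul]
    congr 1
    exact (hcent s (Submonoid.subset_closure hs) t).symm
  have hmem : ∀ c ∈ Submonoid.closure S, of' c ∈ Algebra.adjoin K (of' '' S) := by
    intro c hc
    induction hc using Submonoid.closure_induction with
    | mem b hb => exact Algebra.subset_adjoin (Set.mem_image_of_mem _ hb)
    | one => rw [map_one]; exact one_mem _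
    | mul c₁ c₂ _ _ h₁ h₂ => rw [map_mul]; exact mul_mem h₁ h₂
  have hspan : Submodule.span (Algebra.adjoin K (of' '' S)) (of' '' (F : Set _)) = ⊤ := by
    rw [eq_top_iff]
    rintro z -
    induction z using MonoidAlgebra.induction_on with
    | of a =>
      obtain ⟨c, hc, f, hf, ha⟩ := hdecomp a
      rw [ha, map_mul]
      have : of' c * of' f = (⟨of' c, hmem c hc⟩ : Algebra.adjoin K (of' '' S)) • of' f := by
        rw [Subalgebra.smul_def, smul_eq_mul]
      rw [this]
      exact Submodule.smul_mem _ _ (Submodule.subset_span ⟨f, hf, rfl⟩)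
    | add f g hf hg => exact add_mem hf hg
    | smul r f hf =>
      have : r • f = (⟨algebraMap K _ r, Subalgebra.algebraMap_mem _ r⟩ :
          Algebra.adjoin K (of' '' S)) • f := by
        rw [Subalgebra.smul_def, algebraMap_smul]
      rw [this]
      exact Submodule.smul_mem _ _ hf
  haveI hMF : Module.Finite (Algebra.adjoin K (of' '' S)) (MonoidAlgebra K (DerivedMonoid lam rho)) := by
    constructor
    refine ⟨F.image of', ?_⟩
    rw [Finset.coe_image]
    exact hspan
  letI : CommRing (Algebra.adjoin K (of' '' S)) := Algebra.adjoinCommRingOfComm K hScomm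
  haveI : IsNoetherianRing (Algebra.adjoin K (of' '' S)) := by
    have hfg : (Algebra.adjoin K (of' '' S)).FG :=
      ⟨(hSfin.image of').toFinset, by rw [Set.Finite.coe_toFinset]⟩
    haveI : Algebra.FiniteType K (Algebra.adjoin K (of' '' S)) :=
      (Subalgebra.fg_iff_finiteType _).1 hfg
    exact Algebra.FiniteType.isNoetherianRing K _
  haveI : IsNoetherian (Algebra.adjoin K (of' '' S)) (MonoidAlgebra K (DerivedMonoid lam rho)) :=
    isNoetherian_of_isNoetherianRing_of_finite _ _
  have hNR : IsNoetherianRing (MonoidAlgebra K (DerivedMonoid lam rho)) :=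
    isNoetherian_of_tower (Algebra.adjoin K (of' '' S)) this
  exact ⟨hMF, hNR⟩
end

section
/- Let (X,r) be a finite bijective left non-degenerate solution of the Yang–Baxter equation and A = A(X,r). If A is cancellative, then (X,r) is involutive (r² = id) and A is the free abelian monoid on X. Conversely, if (X,r) is involutive then A is the free abelian monoid of rank |X|. -/
namespace Stmt11Aux

variable {X : Type*} (lam : X → Equiv.Perm X) (rho : X → X → X)

lemma ofA_mul_ofA (x z : X) :
    ofA lam rho x * ofA lam rho z =
      ofA lam rho z * ofA lam rho (sigmaMap lam rho z x) := by
  have h : (conGen (derivedRel lam rho))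
      (FreeMonoid.of x * FreeMonoid.of z)
      (FreeMonoid.of z * FreeMonoid.of (sigmaMap lam rho z x)) :=
    ConGen.Rel.of _ _ ⟨x, z, rfl, rfl⟩
  show (conGen (derivedRel lam rho)).mk' (FreeMonoid.of x) *
      (conGen (derivedRel lam rho)).mk' (FreeMonoid.of z)
      = (conGen (derivedRel lam rho)).mk' (FreeMonoid.of z) *
        (conGen (derivedRel lam rho)).mk' (FreeMonoid.of (sigmaMap lam rho z x))
  rw [← map_mul, ← map_mul]
  exact (Con.eq _).mpr h

/-- Generators are distinct in `A`. -/
lemma of_inj_A {p q : X} (h : ofA lam rho p = ofA lam rho q) : p = q := by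
  let S : Con (FreeMonoid X) :=
    { r := fun u v => u = v ∨ (2 ≤ u.length ∧ 2 ≤ v.length)
      iseqv := ⟨fun _ => Or.inl rfl,
        fun h => h.elim (fun e => Or.inl e.symm) (fun hh => Or.inr ⟨hh.2, hh.1⟩),
        fun h1 h2 => by
          rcases h1 with rfl | h1
          · exact h2
          · rcases h2 with rfl | h2
            · exact Or.inr h1
            · exact Or.inr ⟨h1.1, h2.2⟩⟩
      mul' := by
        rintro a b c d h1 h2
        rcases h1 with rfl | h1
        · rcases h2 with rfl | h2
          · exact Or.inl rfl
          · refine Or.inr ⟨?_, ?_⟩ <;> rw [FreeMonoid.length_mul]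
            · exact le_trans h2.1 (Nat.le_add_left _ _)
            · exact le_trans h2.2 (Nat.le_add_left _ _)
        · refine Or.inr ⟨?_, ?_⟩ <;> rw [FreeMonoid.length_mul]
          · exact le_trans h1.1 (Nat.le_add_right _ _)
          · exact le_trans h1.2 (Nat.le_add_right _ _) }
  have hS : conGen (derivedRel lam rho) ≤ S := by
    apply Con.conGen_le.mpr
    rintro u v ⟨x, z, rfl, rfl⟩
    refine Or.inr ⟨?_, ?_⟩ <;>
      simp [FreeMonoid.length_mul, FreeMonoid.length_of]
  have h2 : S (FreeMonoid.of p) (FreeMonoid.of q) := hS ((Con.eq _).mp h)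
  rcases h2 with e | hlen
  · exact FreeMonoid.of_injective e
  · exfalso
    have := hlen.1
    rw [FreeMonoid.length_of] at this
    omega

/-- A word contains two distinct letters. -/
def Imp (u : FreeMonoid X) : Prop :=
  ∃ a ∈ FreeMonoid.toList u, ∃ b ∈ FreeMonoid.toList u, a ≠ b

lemma imp_mul_left {u : FreeMonoid X} (v : FreeMonoid X) (h : Imp u) : Imp (u * v) := by
  obtain ⟨a, ha, b, hb, hne⟩ := h
  exact ⟨a, by simp [FreeMonoid.toList_mul, ha], b, by simp [FreeMonoid.toList_mul, hb], hne⟩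

lemma imp_mul_right (u : FreeMonoid X) {v : FreeMonoid X} (h : Imp v) : Imp (u * v) := by
  obtain ⟨a, ha, b, hb, hne⟩ := h
  exact ⟨a, by simp [FreeMonoid.toList_mul, ha], b, by simp [FreeMonoid.toList_mul, hb], hne⟩

lemma toList_of_pow (x : X) : ∀ m : ℕ,
    FreeMonoid.toList (FreeMonoid.of x ^ m) = List.replicate m x
  | 0 => rfl
  | m + 1 => by
    rw [pow_succ', FreeMonoid.toList_mul, FreeMonoid.toList_of, toList_of_pow x m,
      List.replicate_succ]
    rfl

lemma sigma_eq_id [Fintype X]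
    (hbij : Function.Bijective (fun p : X × X => (lam p.1 p.2, rho p.2 p.1)))
    (hrc : ∀ a b c : DerivedMonoid lam rho, a * c = b * c → a = b)
    (hlc : ∀ a b c : DerivedMonoid lam rho, c * a = c * b → a = b) :
    ∀ z x : X, sigmaMap lam rho z x = x := by
  letI : DecidableEq X := Classical.decEq X
  have hinj : ∀ z : X, Function.Injective (sigmaMap lam rho z) := by
    intro z x x' h
    unfold sigmaMap at h
    have h2 := (lam z).injective h
    have h3 : (fun p : X × X => (lam p.1 p.2, rho p.2 p.1)) (x, (lam x).symm z)
        = (fun p : X × X => (lam p.1 p.2, rho p.2 p.1)) (x', (lam x').symm z) := by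
      simp only []
      rw [Equiv.apply_symm_apply, Equiv.apply_symm_apply, h2]
    exact congrArg Prod.fst (hbij.1 h3)
  have hdiag : ∀ x : X, sigmaMap lam rho x x = x := by
    intro x
    have h := ofA_mul_ofA lam rho x x
    exact (of_inj_A lam rho (hlc _ _ _ h)).symm
  set m := Fintype.card (Equiv.Perm X) with hm
  have hmpos : 0 < m := Fintype.card_pos
  have hiter : ∀ z x : X, (sigmaMap lam rho z)^[m] x = x := by
    intro z x
    have hb := (Finite.injective_iff_bijective).mp (hinj z)
    have h1 : (Equiv.ofBijective _ hb) ^ m = 1 := pow_card_eq_one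
    have h2 : (sigmaMap lam rho z)^[m] x = ((Equiv.ofBijective _ hb) ^ m) x := by
      rw [Equiv.Perm.coe_pow]; rfl
    rw [h2, h1]; rfl
  have P1 : ∀ (k : ℕ) (x z : X),
      ofA lam rho x * (ofA lam rho z) ^ k
        = (ofA lam rho z) ^ k * ofA lam rho ((sigmaMap lam rho z)^[k] x) := by
    intro k
    induction k with
    | zero => intro x z; simp
    | succ k ih =>
      intro x z
      rw [pow_succ', ← mul_assoc, ofA_mul_ofA, mul_assoc, ih, ← mul_assoc, ← pow_succ',
        Function.iterate_succ_apply]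
  have P2 : ∀ (k : ℕ) (x z : X),
      (ofA lam rho x) ^ k * ofA lam rho z
        = ofA lam rho z * (ofA lam rho (sigmaMap lam rho z x)) ^ k := by
    intro k
    induction k with
    | zero => intro x z; simp
    | succ k ih =>
      intro x z
      rw [pow_succ', mul_assoc, ih, ← mul_assoc, ofA_mul_ofA, mul_assoc, ← pow_succ']
  have hcent : ∀ x z : X,
      ofA lam rho x * (ofA lam rho z) ^ m = (ofA lam rho z) ^ m * ofA lam rho x := by
    intro x z
    rw [P1, hiter]
  intro z x
  set w := sigmaMap lam rho z x with hw
  have h1 : (ofA lam rho x) ^ m * ofA lam rho z = (ofA lam rho w) ^ m * ofA lam rho z := by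
    rw [P2, hcent z w]
  have h2 : (ofA lam rho x) ^ m = (ofA lam rho w) ^ m := hrc _ _ _ h1
  have h3 : (conGen (derivedRel lam rho)) (FreeMonoid.of x ^ m) (FreeMonoid.of w ^ m) := by
    have h4 : (conGen (derivedRel lam rho)).mk' (FreeMonoid.of x ^ m)
        = (conGen (derivedRel lam rho)).mk' (FreeMonoid.of w ^ m) := by
      rw [map_pow, map_pow]; exact h2
    exact (Con.eq _).mp h4
  let S : Con (FreeMonoid X) :=
    { r := fun u v => u = v ∨ (Imp u ∧ Imp v)
      iseqv := ⟨fun _ => Or.inl rfl,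
        fun h => h.elim (fun e => Or.inl e.symm) (fun hh => Or.inr ⟨hh.2, hh.1⟩),
        fun h1 h2 => by
          rcases h1 with rfl | h1
          · exact h2
          · rcases h2 with rfl | h2
            · exact Or.inr h1
            · exact Or.inr ⟨h1.1, h2.2⟩⟩
      mul' := by
        rintro a b c d h1 h2
        rcases h1 with rfl | h1
        · rcases h2 with rfl | h2
          · exact Or.inl rfl
          · exact Or.inr ⟨imp_mul_right a h2.1, imp_mul_right a h2.2⟩
        · exact Or.inr ⟨imp_mul_left _ h1.1, imp_mul_left _ h1.2⟩ }
  have hle : conGen (derivedRel lam rho) ≤ S := by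
    apply Con.conGen_le.mpr
    rintro u v ⟨a, b, rfl, rfl⟩
    by_cases hab : a = b
    · subst hab
      rw [hdiag a]
      exact Or.inl rfl
    · refine Or.inr ⟨⟨a, ?_, b, ?_, hab⟩, ⟨b, ?_, sigmaMap lam rho b a, ?_, ?_⟩⟩
      · simp [FreeMonoid.toList_mul, FreeMonoid.toList_of]
      · simp [FreeMonoid.toList_mul, FreeMonoid.toList_of]
      · simp [FreeMonoid.toList_mul, FreeMonoid.toList_of]
      · simp [FreeMonoid.toList_mul, FreeMonoid.toList_of]
      · intro hh
        exact hab (hinj b (by rw [hdiag b, ← hh]))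
  have hS : S (FreeMonoid.of x ^ m) (FreeMonoid.of w ^ m) := hle h3
  rcases hS with he | ⟨hi, _⟩
  · have hx := congrArg FreeMonoid.toList he
    rw [toList_of_pow, toList_of_pow] at hx
    have hxmem : x ∈ List.replicate m x := by
      rw [List.mem_replicate]
      exact ⟨by omega, rfl⟩
    rw [hx] at hxmem
    exact (List.eq_of_mem_replicate hxmem).symm
  · exfalso
    obtain ⟨a, ha, b, hb, hne⟩ := hi
    rw [toList_of_pow] at ha hb
    exact hne ((List.eq_of_mem_replicate ha).trans (List.eq_of_mem_replicate hb).symm)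

lemma free_abelian (hσ : ∀ z x : X, sigmaMap lam rho z x = x) :
    ∃ e : DerivedMonoid lam rho ≃* Multiplicative (X →₀ ℕ),
      ∀ x : X, e (ofA lam rho x) = Multiplicative.ofAdd (Finsupp.single x 1) := by
  classical
  set g : X → Multiplicative (X →₀ ℕ) :=
    fun x => Multiplicative.ofAdd (Finsupp.single x 1) with hg
  have hle : conGen (derivedRel lam rho) ≤ Con.ker (FreeMonoid.lift g) := by
    apply Con.conGen_le.mpr
    rintro u v ⟨a, b, rfl, rfl⟩
    rw [Con.ker_rel, hσ b a, map_mul, map_mul, FreeMonoid.lift_eval_of,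
      FreeMonoid.lift_eval_of]
    exact mul_comm _ _
  set C := conGen (derivedRel lam rho) with hC
  set f : DerivedMonoid lam rho →* Multiplicative (X →₀ ℕ) :=
    C.lift (FreeMonoid.lift g) hle with hf
  have hfof : ∀ x : X, f (ofA lam rho x) = g x := by
    intro x
    show C.lift (FreeMonoid.lift g) hle (C.mk' (FreeMonoid.of x)) = g x
    rw [Con.lift_mk', FreeMonoid.lift_eval_of]
  have hval : ∀ l : List X, FreeMonoid.lift g (FreeMonoid.ofList l)
      = Multiplicative.ofAdd (Multiset.toFinsupp (l : Multiset X)) := by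
    intro l
    induction l with
    | nil => simp
    | cons a l ih =>
      have h1 : FreeMonoid.ofList (a :: l) = FreeMonoid.of a * FreeMonoid.ofList l := rfl
      rw [h1, map_mul, FreeMonoid.lift_eval_of, ih, ← Multiset.cons_coe,
        ← Multiset.singleton_add, map_add, Multiset.toFinsupp_singleton, ofAdd_add]
  have hcomm : ∀ x z : X,
      C.mk' (FreeMonoid.of x) * C.mk' (FreeMonoid.of z)
        = C.mk' (FreeMonoid.of z) * C.mk' (FreeMonoid.of x) := by
    intro x z
    have h := ofA_mul_ofA lam rho x z
    rw [hσ] at h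
    exact h
  have hperm : ∀ {l l' : List X}, l.Perm l' →
      C.mk' (FreeMonoid.ofList l) = C.mk' (FreeMonoid.ofList l') := by
    intro l l' hp
    induction hp with
    | nil => rfl
    | cons a _ ih =>
      show C.mk' (FreeMonoid.of a * FreeMonoid.ofList _)
          = C.mk' (FreeMonoid.of a * FreeMonoid.ofList _)
      rw [map_mul, map_mul, ih]
    | swap a b l =>
      show C.mk' (FreeMonoid.of b * (FreeMonoid.of a * FreeMonoid.ofList l))
          = C.mk' (FreeMonoid.of a * (FreeMonoid.of b * FreeMonoid.ofList l))
      rw [map_mul, map_mul, map_mul, map_mul, ← mul_assoc, ← mul_assoc, hcomm b a]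
    | trans _ _ ih1 ih2 => exact ih1.trans ih2
  have hinjf : Function.Injective f := by
    intro A B h
    obtain ⟨u, rfl⟩ := Con.mk'_surjective A
    obtain ⟨v, rfl⟩ := Con.mk'_surjective B
    have hu : f (C.mk' u) = FreeMonoid.lift g u := Con.lift_mk' hle u
    have hv : f (C.mk' v) = FreeMonoid.lift g v := Con.lift_mk' hle v
    rw [hu, hv, ← FreeMonoid.ofList_toList u, ← FreeMonoid.ofList_toList v,
      hval, hval] at h
    have h2 := Multiplicative.ofAdd.injective h
    have h3 := Multiset.toFinsupp.injective h2
    have h4 := Multiset.coe_eq_coe.mp h3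
    rw [← FreeMonoid.ofList_toList u, ← FreeMonoid.ofList_toList v]
    exact hperm h4
  have hsurf : Function.Surjective f := by
    intro s
    obtain ⟨t, rfl⟩ : ∃ t : X →₀ ℕ, Multiplicative.ofAdd t = s := ⟨s, rfl⟩
    induction t using Finsupp.induction with
    | zero => exact ⟨1, by rw [map_one]; rfl⟩
    | single_add a b t hat hb ih =>
      obtain ⟨c, hc⟩ := ih
      refine ⟨(ofA lam rho a) ^ b * c, ?_⟩
      rw [map_mul, map_pow, hfof, hc, hg]
      show (Multiplicative.ofAdd (Finsupp.single a 1)) ^ b * Multiplicative.ofAdd t = _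
      rw [← ofAdd_nsmul, ← ofAdd_add, Finsupp.smul_single', mul_one]
  refine ⟨MulEquiv.ofBijective f ⟨hinjf, hsurf⟩, fun x => ?_⟩
  show f (ofA lam rho x) = _
  rw [hfof]

end Stmt11Aux

theorem stmt11 {X : Type*} [Fintype X] (lam : X → Equiv.Perm X) (rho : X → X → X)
    (hYB1 : ∀ x y z : X, lam x (lam y z) = lam (lam x y) (lam (rho y x) z))
    (hYB2 : ∀ x y z : X,
      lam (rho (lam y z) x) (rho z y) = rho (lam (rho y x) z) (lam x y))
    (hYB3 : ∀ x y z : X, rho z (rho y x) = rho (rho z y) (rho (lam y z) x))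
    (hbij : Function.Bijective (fun p : X × X => (lam p.1 p.2, rho p.2 p.1))) :
    -- if `A` is cancellative then `r` is involutive and `A` is the free abelian monoid on `X`...
    (((∀ a b c : DerivedMonoid lam rho, a * c = b * c → a = b) ∧
        (∀ a b c : DerivedMonoid lam rho, c * a = c * b → a = b)) →
      (∀ p : X × X,
        (fun q : X × X => (lam q.1 q.2, rho q.2 q.1))
          ((fun q : X × X => (lam q.1 q.2, rho q.2 q.1)) p) = p) ∧
      ∃ e : DerivedMonoid lam rho ≃* Multiplicative (X →₀ ℕ),
        ∀ x : X, e (ofA lam rho x) = Multiplicative.ofAdd (Finsupp.single x 1)) ∧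
    -- ...and conversely, if `r` is involutive then `A` is the free abelian monoid of rank `|X|`
    ((∀ p : X × X,
        (fun q : X × X => (lam q.1 q.2, rho q.2 q.1))
          ((fun q : X × X => (lam q.1 q.2, rho q.2 q.1)) p) = p) →
      ∃ e : DerivedMonoid lam rho ≃* Multiplicative (X →₀ ℕ),
        ∀ x : X, e (ofA lam rho x) = Multiplicative.ofAdd (Finsupp.single x 1)) := by
  have hfirst : (∀ z x : X, sigmaMap lam rho z x = x) →
      ∀ p : X × X, (fun q : X × X => (lam q.1 q.2, rho q.2 q.1))
          ((fun q : X × X => (lam q.1 q.2, rho q.2 q.1)) p) = p := by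
    intro hσ p
    obtain ⟨x, y⟩ := p
    have h1 : ∀ a b : X, lam (lam a b) (rho b a) = a := by
      intro a b
      have h := hσ (lam a b) a
      unfold sigmaMap at h
      rwa [Equiv.symm_apply_apply] at h
    have hx : lam (lam x y) (rho y x) = x := h1 x y
    have h2 : rho (rho y x) (lam x y) = y := by
      have h := h1 (lam x y) (rho y x)
      rw [hx] at h
      exact (lam x).injective h
    show (lam (lam x y) (rho y x), rho (rho y x) (lam x y)) = (x, y)
    rw [hx, h2]
  constructor
  · rintro ⟨hrc, hlc⟩
    have hσ := Stmt11Aux.sigma_eq_id lam rho hbij hrc hlc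
    exact ⟨hfirst hσ, Stmt11Aux.free_abelian lam rho hσ⟩
  · intro hinv
    have hσ : ∀ z x : X, sigmaMap lam rho z x = x := by
      intro z x
      have h := congrArg Prod.fst (hinv (x, (lam x).symm z))
      simp only [] at h
      rw [Equiv.apply_symm_apply] at h
      unfold sigmaMap
      exact h
    exact Stmt11Aux.free_abelian lam rho hσ
end

section
/- Let (X,r) be a left non-degenerate solution and ϕ: A(X,r) → 𝒢(X,r) the map with ϕ(a)ϕ(b) = ϕ(a·ϕ(a)(b)) coming from the bijective 1-cocycle. Define τ: X → X by τ(x) = λ_x^{-1}(x). Then for each x ∈ X and n ≥ 1, in the monoid M(X,r) ⊆ A ⋊ 𝒢 one has (x^n, ϕ(x^n)) = (x, ϕ(x))(τ(x), ϕ(τ(x)))⋯(τ^{n-1}(x), ϕ(τ^{n-1}(x))). -/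
/-!
The cocycle identity `ϕ a * ϕ b = ϕ (a * ϕ a b)` says exactly that the graph `{(a, ϕ a)}` is closed
under multiplication in `A ⋊ Aut A`: `(a, ϕ a)(b, ϕ b) = (a * ϕ a b, ϕ (a * ϕ a b))`. Hence the product
of the `(yᵢ, ϕ yᵢ)` is `(x ^ n, ϕ (x ^ n))` as soon as `ϕ (x ^ i) yᵢ = x` for every `i`. For `yᵢ = τⁱ(x)`
this follows by induction on `i`: `x ^ (i + 1) = x ^ i * ϕ (x ^ i) yᵢ` gives
`ϕ (x ^ (i + 1)) = ϕ (x ^ i) * ϕ yᵢ`, and `ϕ yᵢ yᵢ₊₁ = λ_{yᵢ} (λ_{yᵢ}⁻¹ yᵢ) = yᵢ`.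
-/

section Cocycle

variable {A : Type*} [Monoid A] {ϕ : A → MulAut A}

theorem cocycle_map_one (hϕ : ∀ a b : A, ϕ a * ϕ b = ϕ (a * ϕ a b)) : ϕ 1 = 1 :=
  mul_eq_left.mp <| by simpa only [map_one, mul_one] using hϕ 1 1

theorem MonoidSDP.mk_mul_mk_of_cocycle (hϕ : ∀ a b : A, ϕ a * ϕ b = ϕ (a * ϕ a b)) (a b : A) :
    MonoidSDP.mk a (ϕ a) * MonoidSDP.mk b (ϕ b) = MonoidSDP.mk (a * ϕ a b) (ϕ (a * ϕ a b)) := by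
  rw [MonoidSDP.mul_def, hϕ]

theorem cocycle_pow_apply_of_apply_succ (hϕ : ∀ a b : A, ϕ a * ϕ b = ϕ (a * ϕ a b))
    {x : A} {y : ℕ → A} (hy₀ : y 0 = x) (hy : ∀ m, ϕ (y m) (y (m + 1)) = y m) (m : ℕ) :
    ϕ (x ^ m) (y m) = x := by
  induction m with
  | zero => rw [pow_zero, cocycle_map_one hϕ, hy₀, MulAut.one_apply]
  | succ m ih =>
    have hpow : ϕ (x ^ (m + 1)) = ϕ (x ^ m) * ϕ (y m) := by
      rw [hϕ, ih, pow_succ]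
    rw [hpow, MulAut.mul_apply, hy, ih]

theorem MonoidSDP.mk_pow_eq_prod_of_apply_succ (hϕ : ∀ a b : A, ϕ a * ϕ b = ϕ (a * ϕ a b))
    {x : A} {y : ℕ → A} (hy₀ : y 0 = x) (hy : ∀ m, ϕ (y m) (y (m + 1)) = y m) (n : ℕ) :
    MonoidSDP.mk (x ^ n) (ϕ (x ^ n)) =
      ((List.range n).map fun i => MonoidSDP.mk (y i) (ϕ (y i))).prod := by
  induction n with
  | zero => rw [pow_zero, cocycle_map_one hϕ]; rfl
  | succ n ih =>
    rw [List.prod_range_succ, ← ih, MonoidSDP.mk_mul_mk_of_cocycle hϕ,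
      cocycle_pow_apply_of_apply_succ hϕ hy₀ hy, ← pow_succ]

end Cocycle

theorem stmt17_general {X : Type*} (lam : X → Equiv.Perm X) (rho : X → X → X)
    -- `ϕ : A → 𝒢` coming from the bijective 1-cocycle, with `ϕ(x) = λ_x` on generators
    (ϕ : DerivedMonoid lam rho → MulAut (DerivedMonoid lam rho))
    (hϕcoc : ∀ a b : DerivedMonoid lam rho, ϕ a * ϕ b = ϕ (a * ϕ a b))
    (hϕgen : ∀ x y : X, ϕ (ofA lam rho x) (ofA lam rho y) = ofA lam rho (lam x y))
    -- `τ(x) = λ_x⁻¹(x)`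
    (τ : X → X) (hτ : ∀ x : X, τ x = (lam x).symm x) :
    -- `(x^n, ϕ(x^n)) = (x, ϕ(x))·(τ(x), ϕ(τ(x))) ⋯ (τ^{n-1}(x), ϕ(τ^{n-1}(x)))` in `A ⋊ 𝒢`
    ∀ (x : X) (n : ℕ), 1 ≤ n →
      MonoidSDP.mk (ofA lam rho x ^ n) (ϕ (ofA lam rho x ^ n)) =
        ((List.range n).map fun i =>
          MonoidSDP.mk (ofA lam rho (τ^[i] x)) (ϕ (ofA lam rho (τ^[i] x)))).prod := by
  intro x n _
  refine MonoidSDP.mk_pow_eq_prod_of_apply_succ hϕcoc (y := fun i => ofA lam rho (τ^[i] x))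
    rfl (fun m => ?_) n
  rw [Function.iterate_succ_apply', hϕgen, hτ, Equiv.apply_symm_apply]

theorem stmt17 {X : Type*} (lam : X → Equiv.Perm X) (rho : X → X → X)
    (hYB1 : ∀ x y z : X, lam x (lam y z) = lam (lam x y) (lam (rho y x) z))
    (hYB2 : ∀ x y z : X,
      lam (rho (lam y z) x) (rho z y) = rho (lam (rho y x) z) (lam x y))
    (hYB3 : ∀ x y z : X, rho z (rho y x) = rho (rho z y) (rho (lam y z) x))
    -- `ϕ : A → 𝒢` coming from the bijective 1-cocycle, with `ϕ(x) = λ_x` on generators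
    (ϕ : DerivedMonoid lam rho → MulAut (DerivedMonoid lam rho))
    (hϕ1 : ϕ 1 = 1)
    (hϕcoc : ∀ a b : DerivedMonoid lam rho, ϕ a * ϕ b = ϕ (a * ϕ a b))
    (hϕgen : ∀ x y : X, ϕ (ofA lam rho x) (ofA lam rho y) = ofA lam rho (lam x y))
    -- `τ(x) = λ_x⁻¹(x)`
    (τ : X → X) (hτ : ∀ x : X, τ x = (lam x).symm x) :
    -- `(x^n, ϕ(x^n)) = (x, ϕ(x))·(τ(x), ϕ(τ(x))) ⋯ (τ^{n-1}(x), ϕ(τ^{n-1}(x)))` in `A ⋊ 𝒢`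
    ∀ (x : X) (n : ℕ), 1 ≤ n →
      MonoidSDP.mk (ofA lam rho x ^ n) (ϕ (ofA lam rho x ^ n)) =
        ((List.range n).map fun i =>
          MonoidSDP.mk (ofA lam rho (τ^[i] x)) (ϕ (ofA lam rho (τ^[i] x)))).prod :=
  stmt17_general lam rho ϕ hϕcoc hϕgen τ hτ
end

section
/- Let (X,r) be a finite bijective left non-degenerate solution of the Yang–Baxter equation, A = A(X,r), and C = ⟨x^d : x ∈ X⟩ the central submonoid generated by d-th powers (d chosen so all x^d are central and ϕ(x^d) = id). Then the quotient of A by the congruence a₁ ∼ a₂ ⟺ c₁a₁ = c₂a₂ for some c₁,c₂ ∈ C is a finite group, and consequently there exists t ≥ 1 such that ϕ(a^t) = id for every a ∈ A, where ϕ: A → 𝒢(X,r) is the map satisfying ϕ(a)ϕ(b) = ϕ(a·ϕ(a)(b)). -/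
set_option maxHeartbeats 1000000

section Aux

variable {Q : Type*} [Monoid Q]
open scoped commutatorElement

lemma aux_unit {S : Set Q} (hgen : ∀ q : Q, q ∈ Submonoid.closure S)
    {d : ℕ} (hd : 1 ≤ d) (hpow : ∀ s ∈ S, s ^ d = 1) (q : Q) : IsUnit q := by
  refine Submonoid.closure_induction (motive := fun x _ => IsUnit x) ?_ isUnit_one
    (fun a b _ _ ha hb => ha.mul hb) (hgen q)
  intro s hs
  have hd' : d - 1 + 1 = d := Nat.succ_pred_eq_of_pos hd
  have h1 : s * s ^ (d - 1) = 1 := by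
    rw [← pow_succ', hd', hpow s hs]
  have h2 : s ^ (d - 1) * s = 1 := by
    rw [← pow_succ, hd', hpow s hs]
  exact ⟨⟨s, s ^ (d - 1), h1, h2⟩, rfl⟩

private lemma comm_central_left {G : Type*} [Group G] (a c u : G)
    (hu : ∀ x, x * u = u * x) : ⁅a * u, c⁆ = ⁅a, c⁆ := by
  have hu' : ∀ x : G, x * u⁻¹ = u⁻¹ * x := fun x =>
    (Commute.inv_right (hu x : Commute x u)).eq
  simp only [commutatorElement_def, mul_inv_rev]
  calc a * u * c * (u⁻¹ * a⁻¹) * c⁻¹ = a * u * (c * u⁻¹) * a⁻¹ * c⁻¹ := by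
        simp [mul_assoc]
    _ = a * u * (u⁻¹ * c) * a⁻¹ * c⁻¹ := by rw [hu' c]
    _ = a * c * a⁻¹ * c⁻¹ := by simp [mul_assoc]

private lemma comm_central_right {G : Type*} [Group G] (a c u : G)
    (hu : ∀ x, x * u = u * x) : ⁅a, c * u⁆ = ⁅a, c⁆ := by
  simp only [commutatorElement_def, mul_inv_rev]
  calc a * (c * u) * a⁻¹ * (u⁻¹ * c⁻¹) = a * c * (u * a⁻¹ * u⁻¹) * c⁻¹ := by
        simp [mul_assoc]
    _ = a * c * (a⁻¹ * u * u⁻¹) * c⁻¹ := by rw [← hu a⁻¹]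
    _ = a * c * a⁻¹ * c⁻¹ := by simp [mul_assoc]

lemma aux_finite {S : Set Q} (hSfin : S.Finite)
    (hgen : ∀ q : Q, q ∈ Submonoid.closure S)
    {d : ℕ} (hd : 1 ≤ d) (hpow : ∀ s ∈ S, s ^ d = 1)
    (hconj : ∀ s ∈ S, ∀ t ∈ S, ∃ u ∈ S, t * s = s * u) :
    Finite Q := by
  classical
  have hunit : ∀ q : Q, IsUnit q := fun q => aux_unit hgen hd hpow q
  have hsurjval : Function.Surjective (Units.val : Qˣ → Q) :=
    fun q => ⟨(hunit q).unit, (hunit q).unit_spec⟩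
  set T : Set Qˣ := Units.val ⁻¹' S with hT
  have hTfin : T.Finite := hSfin.preimage Units.val_injective.injOn
  -- generation at the level of units
  have key : ∀ l : List Q, (∀ y ∈ l, y ∈ S) → ∀ u : Qˣ, l.prod = (u : Q) →
      u ∈ Submonoid.closure T := by
    intro l
    induction l with
    | nil =>
      intro _ u hu
      have : u = 1 := Units.ext (by simpa using hu.symm)
      rw [this]; exact one_mem _
    | cons x xs ih =>
      intro hmem u hu
      obtain ⟨v, hv⟩ := hunit x
      have hvT : v ∈ T := by
        rw [hT, Set.mem_preimage, hv]; exact hmem x List.mem_cons_self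
      have hxprod : (x : Q) * xs.prod = (u : Q) := by simpa [List.prod_cons] using hu
      have hw : xs.prod = ((v⁻¹ * u : Qˣ) : Q) := by
        calc xs.prod = ↑v⁻¹ * (↑v * xs.prod) := by
              rw [← mul_assoc, Units.inv_mul, one_mul]
          _ = ↑v⁻¹ * ↑u := by rw [hv, hxprod]
          _ = ((v⁻¹ * u : Qˣ) : Q) := (Units.val_mul _ _).symm
      have hmem' := ih (fun y hy => hmem y (List.mem_cons_of_mem _ hy)) (v⁻¹ * u) hw
      have hu' : u = v * (v⁻¹ * u) := (mul_inv_cancel_left v u).symm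
      rw [hu']
      exact mul_mem (Submonoid.subset_closure hvT) hmem'
  have hTgen : ∀ u : Qˣ, u ∈ Submonoid.closure T := by
    intro u
    obtain ⟨l, hl, hprod⟩ := Submonoid.exists_list_of_mem_closure (hgen (u : Q))
    exact key l hl u hprod
  -- conjugation closure
  have hconjT : ∀ s ∈ T, ∀ t ∈ T, s⁻¹ * t * s ∈ T := by
    intro s hs t ht
    obtain ⟨u, huS, hequ⟩ := hconj (s : Q) hs (t : Q) ht
    have hval : ((s⁻¹ * t * s : Qˣ) : Q) = u := by
      calc ((s⁻¹ * t * s : Qˣ) : Q) = ↑s⁻¹ * ((t : Q) * (s : Q)) := by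
            rw [Units.val_mul, Units.val_mul, mul_assoc]
        _ = ↑s⁻¹ * ((s : Q) * u) := by rw [hequ]
        _ = u := by rw [← mul_assoc, Units.inv_mul, one_mul]
    rw [hT, Set.mem_preimage, hval]; exact huS
  have hconjT' : ∀ s ∈ T, ∀ t ∈ T, s * t * s⁻¹ ∈ T := by
    intro s hs t ht
    have hmaps : Set.MapsTo (fun t => s⁻¹ * t * s) T T := fun a ha => hconjT s hs a ha
    have hinj : Set.InjOn (fun t => s⁻¹ * t * s) T := by
      intro a _ b _ hab
      simpa using mul_left_cancel (mul_right_cancel hab)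
    have hbij := (hTfin.injOn_iff_bijOn_of_mapsTo hmaps).mp hinj
    obtain ⟨t', ht', hteq⟩ := hbij.surjOn ht
    have : t' = s * t * s⁻¹ := by
      rw [← hteq]; group
    rw [← this]; exact ht'
  -- conjugation by arbitrary elements
  let P : Submonoid Qˣ :=
    { carrier := {g | ∀ t ∈ T, g * t * g⁻¹ ∈ T ∧ g⁻¹ * t * g ∈ T}
      one_mem' := by intro t ht; refine ⟨?_, ?_⟩ <;> simpa using ht
      mul_mem' := by
        intro a b ha hb t ht
        constructor
        · have h1 : a * b * t * (a * b)⁻¹ = a * (b * t * b⁻¹) * a⁻¹ := by group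
          rw [h1]; exact (ha _ (hb t ht).1).1
        · have h1 : (a * b)⁻¹ * t * (a * b) = b⁻¹ * (a⁻¹ * t * a) * b := by group
          rw [h1]; exact (hb _ (ha t ht).2).2 }
  have hTP : T ⊆ (P : Set Qˣ) := by
    intro s hs
    show ∀ t ∈ T, s * t * s⁻¹ ∈ T ∧ s⁻¹ * t * s ∈ T
    exact fun t ht => ⟨hconjT' s hs t ht, hconjT s hs t ht⟩
  have hP : ∀ g : Qˣ, ∀ t ∈ T, g * t * g⁻¹ ∈ T := by
    intro g
    have hg : g ∈ P := Submonoid.closure_le.mpr hTP (hTgen g)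
    exact fun t ht => (hg t ht).1
  -- centralizer of T is the center
  have hcent : ∀ g : Qˣ, (∀ t ∈ T, t * g = g * t) → ∀ h : Qˣ, h * g = g * h := by
    intro g hg h
    refine Submonoid.closure_induction (motive := fun x _ => x * g = g * x) hg (by simp) ?_ (hTgen h)
    intro a b _ _ ha hb
    rw [mul_assoc, hb, ← mul_assoc, ha, mul_assoc]
  -- finite quotient by the center
  haveI : Finite ↥T := hTfin.to_subtype
  let f : Qˣ → (↥T → ↥T) := fun g t => ⟨g * ↑t * g⁻¹, hP g ↑t t.2⟩
  set Z := Subgroup.center Qˣ with hZ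
  have hFinj : Function.Injective (fun (q : Qˣ ⧸ Z) => f q.out) := by
    intro q₁ q₂ hq
    have h1 : ∀ t ∈ T, q₁.out * t * q₁.out⁻¹ = q₂.out * t * q₂.out⁻¹ := by
      intro t ht
      exact congrArg Subtype.val (congrFun hq ⟨t, ht⟩)
    have hcomm : ∀ t ∈ T, t * (q₁.out⁻¹ * q₂.out) = (q₁.out⁻¹ * q₂.out) * t := by
      intro t ht
      calc t * (q₁.out⁻¹ * q₂.out)
          = q₁.out⁻¹ * (q₁.out * t * q₁.out⁻¹) * q₂.out := by group
        _ = q₁.out⁻¹ * (q₂.out * t * q₂.out⁻¹) * q₂.out := by rw [h1 t ht]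
        _ = (q₁.out⁻¹ * q₂.out) * t := by group
    have hz : q₁.out⁻¹ * q₂.out ∈ Z :=
      Subgroup.mem_center_iff.mpr (fun h => hcent _ hcomm h)
    calc q₁ = QuotientGroup.mk q₁.out := (QuotientGroup.out_eq' q₁).symm
      _ = QuotientGroup.mk q₂.out := QuotientGroup.eq.mpr hz
      _ = q₂ := QuotientGroup.out_eq' q₂
  haveI hQZ : Finite (Qˣ ⧸ Z) := Finite.of_injective _ hFinj
  -- the commutator set is finite
  have hcommSet : (commutatorSet Qˣ).Finite := by
    have hsub : commutatorSet Qˣ ⊆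
        Set.range (fun p : (Qˣ ⧸ Z) × (Qˣ ⧸ Z) => ⁅p.1.out, p.2.out⁆) := by
      rintro _ ⟨g, h, rfl⟩
      refine ⟨(QuotientGroup.mk g, QuotientGroup.mk h), ?_⟩
      obtain ⟨z, hzeq⟩ := QuotientGroup.mk_out_eq_mul Z g
      obtain ⟨w, hweq⟩ := QuotientGroup.mk_out_eq_mul Z h
      show ⁅(QuotientGroup.mk g : Qˣ ⧸ Z).out, (QuotientGroup.mk h : Qˣ ⧸ Z).out⁆ = ⁅g, h⁆
      rw [hzeq, hweq]
      have hzc : ∀ x : Qˣ, x * (z : Qˣ) = (z : Qˣ) * x :=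
        fun x => (Subgroup.mem_center_iff.mp z.2 x)
      have hwc : ∀ x : Qˣ, x * (w : Qˣ) = (w : Qˣ) * x :=
        fun x => (Subgroup.mem_center_iff.mp w.2 x)
      rw [comm_central_left _ _ _ hzc, comm_central_right _ _ _ hwc]
    exact (Set.finite_range _).subset hsub
  haveI : Finite ↥(commutatorSet Qˣ) := hcommSet.to_subtype
  haveI : Finite ↥(commutator Qˣ) := inferInstance
  -- finitely generated
  have hclosure_top : Subgroup.closure T = ⊤ := by
    rw [eq_top_iff]
    intro g _
    have hle : Submonoid.closure T ≤ (Subgroup.closure T).toSubmonoid :=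
      Submonoid.closure_le.mpr Subgroup.subset_closure
    exact hle (hTgen g)
  haveI : Group.FG Qˣ := Group.fg_iff.mpr ⟨T, hclosure_top, hTfin⟩
  haveI : Group.FG (Abelianization Qˣ) :=
    Group.fg_of_surjective (f := Abelianization.of)
      (fun a => QuotientGroup.induction_on a fun g => ⟨g, rfl⟩)
  have htor : Monoid.IsTorsion (Abelianization Qˣ) := by
    intro a
    obtain ⟨g, rfl⟩ : ∃ g, Abelianization.of g = a :=
      QuotientGroup.induction_on a fun g => ⟨g, rfl⟩
    refine Submonoid.closure_induction
      (motive := fun x _ => IsOfFinOrder (Abelianization.of x)) ?_ ?_ ?_ (hTgen g)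
    · intro t ht
      refine isOfFinOrder_iff_pow_eq_one.mpr ⟨d, hd, ?_⟩
      rw [← map_pow]
      have h1 : t ^ d = 1 := Units.ext (by
        rw [Units.val_pow_eq_pow_val, Units.val_one]
        exact hpow _ ht)
      rw [h1, map_one]
    · show IsOfFinOrder (Abelianization.of (1 : Qˣ))
      rw [map_one]; exact IsOfFinOrder.one
    · intro a b _ _ ha hb
      rw [map_mul]; exact ha.mul hb
  haveI : Finite (Abelianization Qˣ) := CommGroup.finite_of_fg_torsion _ htor
  haveI : Finite (Qˣ ⧸ commutator Qˣ) := ‹Finite (Abelianization Qˣ)›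
  haveI : Finite Qˣ :=
    Finite.of_equiv _ (Subgroup.groupEquivQuotientProdSubgroup (s := commutator Qˣ)).symm
  exact Finite.of_surjective Units.val hsurjval

end Aux


theorem stmt18 {X : Type*} [Fintype X] (lam : X → Equiv.Perm X) (rho : X → X → X)
    (hYB1 : ∀ x y z : X, lam x (lam y z) = lam (lam x y) (lam (rho y x) z))
    (hYB2 : ∀ x y z : X,
      lam (rho (lam y z) x) (rho z y) = rho (lam (rho y x) z) (lam x y))
    (hYB3 : ∀ x y z : X, rho z (rho y x) = rho (rho z y) (rho (lam y z) x))
    (hbij : Function.Bijective (fun p : X × X => (lam p.1 p.2, rho p.2 p.1)))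
    -- `ϕ : A → 𝒢` coming from the bijective 1-cocycle
    (ϕ : DerivedMonoid lam rho → MulAut (DerivedMonoid lam rho))
    (hϕ1 : ϕ 1 = 1)
    (hϕcoc : ∀ a b : DerivedMonoid lam rho, ϕ a * ϕ b = ϕ (a * ϕ a b))
    (hϕgen : ∀ x y : X, ϕ (ofA lam rho x) (ofA lam rho y) = ofA lam rho (lam x y))
    -- `d ≥ 1` is chosen so that all `x^d` are central and `ϕ(x^d) = id`
    (d : ℕ) (hd : 1 ≤ d)
    (hdc : ∀ (x : X) (b : DerivedMonoid lam rho),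
      b * ofA lam rho x ^ d = ofA lam rho x ^ d * b)
    (hϕd : ∀ x : X, ϕ (ofA lam rho x ^ d) = 1) :
    -- the quotient of `A` by the congruence `a₁ ∼ a₂ ⟺ c₁a₁ = c₂a₂` (c₁,c₂ ∈ C, where
    -- `C = ⟨x^d : x ∈ X⟩`) is a finite group, and `ϕ(aᵗ) = id` for some `t ≥ 1` and all `a`
    ∃ con : Con (DerivedMonoid lam rho),
      (∀ a₁ a₂ : DerivedMonoid lam rho, con a₁ a₂ ↔
        ∃ c₁ ∈ Submonoid.closure
            {b : DerivedMonoid lam rho | ∃ x : X, b = ofA lam rho x ^ d},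
          ∃ c₂ ∈ Submonoid.closure
            {b : DerivedMonoid lam rho | ∃ x : X, b = ofA lam rho x ^ d},
            c₁ * a₁ = c₂ * a₂) ∧
      Finite con.Quotient ∧
      (∀ q : con.Quotient, ∃ q' : con.Quotient, q * q' = 1 ∧ q' * q = 1) ∧
      ∃ t : ℕ, 1 ≤ t ∧ ∀ a : DerivedMonoid lam rho, ϕ (a ^ t) = 1 := by
  classical
  set A := DerivedMonoid lam rho with hA
  set Cset : Set A := {b : A | ∃ x : X, b = ofA lam rho x ^ d} with hCset
  -- every element of the closure of `Cset` is central
  have hcentral : ∀ c ∈ Submonoid.closure Cset, ∀ b : A, b * c = c * b := by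
    intro c hc
    refine Submonoid.closure_induction (motive := fun c _ => ∀ b : A, b * c = c * b) ?_
      (by simp) ?_ hc
    · rintro _ ⟨x, rfl⟩ b; exact hdc x b
    · intro a c _ _ ha hc b
      rw [← mul_assoc, ha b, mul_assoc, hc b, ← mul_assoc]
  -- the congruence
  let con : Con A := {
      r := fun a₁ a₂ => ∃ c₁ ∈ Submonoid.closure Cset, ∃ c₂ ∈ Submonoid.closure Cset,
        c₁ * a₁ = c₂ * a₂
      iseqv := {
        refl := fun a => ⟨1, one_mem _, 1, one_mem _, rfl⟩
        symm := by
          rintro a b ⟨c₁, h₁, c₂, h₂, h⟩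
          exact ⟨c₂, h₂, c₁, h₁, h.symm⟩
        trans := by
          rintro a b c ⟨c₁, h₁, c₂, h₂, h⟩ ⟨d₁, k₁, d₂, k₂, k⟩
          refine ⟨d₁ * c₁, mul_mem k₁ h₁, c₂ * d₂, mul_mem h₂ k₂, ?_⟩
          calc d₁ * c₁ * a = d₁ * (c₁ * a) := mul_assoc _ _ _
            _ = d₁ * (c₂ * b) := by rw [h]
            _ = c₂ * (d₁ * b) := by
                rw [← mul_assoc, ← hcentral d₁ k₁ c₂, mul_assoc]
            _ = c₂ * (d₂ * c) := by rw [k]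
            _ = c₂ * d₂ * c := (mul_assoc _ _ _).symm }
      mul' := by
        rintro w x y z ⟨c₁, h₁, c₂, h₂, h⟩ ⟨d₁, k₁, d₂, k₂, k⟩
        refine ⟨c₁ * d₁, mul_mem h₁ k₁, c₂ * d₂, mul_mem h₂ k₂, ?_⟩
        calc c₁ * d₁ * (w * y) = c₁ * (d₁ * w * y) := by
              rw [mul_assoc, ← mul_assoc d₁ w y]
          _ = c₁ * (w * d₁ * y) := by rw [← hcentral d₁ k₁ w]
          _ = c₁ * w * (d₁ * y) := by rw [mul_assoc w d₁ y, ← mul_assoc]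
          _ = c₂ * x * (d₂ * z) := by rw [h, k]
          _ = c₂ * (x * d₂ * z) := by rw [mul_assoc c₂ x, ← mul_assoc x d₂ z]
          _ = c₂ * (d₂ * x * z) := by rw [hcentral d₂ k₂ x]
          _ = c₂ * d₂ * (x * z) := by rw [mul_assoc d₂ x z, ← mul_assoc]
      }
  -- generators of the quotient
  let Q := con.Quotient
  let F : X → Q := fun x => con.mk' (ofA lam rho x)
  have hQeq : ∀ a b : A, con a b → con.mk' a = con.mk' b := by
    intro a b h
    exact (Con.eq con).mpr h
  have hQeq' : ∀ a b : A, con.mk' a = con.mk' b → con a b := by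
    intro a b h
    exact (Con.eq con).mp h
  have hgen : ∀ q : Q, q ∈ Submonoid.closure (Set.range F) := by
    intro q
    obtain ⟨a, rfl⟩ := con.mk'_surjective q
    obtain ⟨w, rfl⟩ := (conGen (derivedRel lam rho)).mk'_surjective a
    induction w using FreeMonoid.inductionOn' with
    | one =>
      rw [map_one, map_one]
      exact one_mem _
    | of_mul x xs ih =>
      rw [map_mul, map_mul]
      exact mul_mem (Submonoid.subset_closure ⟨x, rfl⟩) ih
  have hpow : ∀ s ∈ Set.range F, s ^ d = 1 := by
    rintro _ ⟨x, rfl⟩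
    have h1 : (F x) ^ d = con.mk' (ofA lam rho x ^ d) := (map_pow _ _ _).symm
    have h2 : con (ofA lam rho x ^ d) 1 :=
      ⟨1, one_mem _, ofA lam rho x ^ d,
        Submonoid.subset_closure ⟨x, rfl⟩, by rw [one_mul, mul_one]⟩
    rw [h1, hQeq _ _ h2, map_one]
  have hrel : ∀ x z : X, ofA lam rho x * ofA lam rho z
      = ofA lam rho z * ofA lam rho (sigmaMap lam rho z x) := by
    intro x z
    have hbase : (conGen (derivedRel lam rho)) (FreeMonoid.of x * FreeMonoid.of z)
        (FreeMonoid.of z * FreeMonoid.of (sigmaMap lam rho z x)) :=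
      ConGen.Rel.of _ _ ⟨x, z, rfl, rfl⟩
    show (conGen (derivedRel lam rho)).mk' (FreeMonoid.of x)
        * (conGen (derivedRel lam rho)).mk' (FreeMonoid.of z)
      = (conGen (derivedRel lam rho)).mk' (FreeMonoid.of z)
        * (conGen (derivedRel lam rho)).mk' (FreeMonoid.of (sigmaMap lam rho z x))
    rw [← map_mul, ← map_mul]
    exact (Con.eq (conGen (derivedRel lam rho))).mpr hbase
  have hconj : ∀ s ∈ Set.range F, ∀ t ∈ Set.range F, ∃ u ∈ Set.range F, t * s = s * u := by
    rintro _ ⟨z, rfl⟩ _ ⟨x, rfl⟩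
    refine ⟨F (sigmaMap lam rho z x), ⟨_, rfl⟩, ?_⟩
    show con.mk' _ * con.mk' _ = con.mk' _ * con.mk' _
    rw [← map_mul, ← map_mul, hrel x z]
  have hfinQ : Finite Q := aux_finite (Set.finite_range F) hgen hd hpow hconj
  refine ⟨con, fun a₁ a₂ => Iff.rfl, hfinQ, ?_, ?_⟩
  · -- every element of the quotient is invertible
    intro q
    obtain ⟨u, rfl⟩ := aux_unit hgen hd hpow q
    exact ⟨↑u⁻¹, u.mul_inv, u.inv_mul⟩
  · -- the exponent
    haveI : Finite Q := hfinQ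
    haveI : Finite Qˣ := inferInstance
    have hϕCone : ∀ c ∈ Submonoid.closure Cset, ϕ c = 1 := by
      intro c hc
      refine Submonoid.closure_induction (motive := fun c _ => ϕ c = 1) ?_ hϕ1 ?_ hc
      · rintro _ ⟨x, rfl⟩; exact hϕd x
      · intro a b _ _ ha hb
        have h := hϕcoc a b
        rw [ha, hb, one_mul] at h
        simpa using h.symm
    have hϕmul : ∀ c : A, ϕ c = 1 → ∀ b : A, ϕ (c * b) = ϕ b := by
      intro c hcc b
      have h := hϕcoc c b
      rw [hcc, one_mul] at h
      simpa using h.symm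
    have hϕcong : ∀ a₁ a₂ : A, con a₁ a₂ → ϕ a₁ = ϕ a₂ := by
      rintro a₁ a₂ ⟨c₁, h₁, c₂, h₂, h⟩
      rw [← hϕmul c₁ (hϕCone c₁ h₁) a₁, h, hϕmul c₂ (hϕCone c₂ h₂) a₂]
    refine ⟨Nat.card Qˣ, Nat.one_le_iff_ne_zero.mpr (Nat.card_pos).ne', ?_⟩
    intro a
    obtain ⟨u, hu⟩ := aux_unit hgen hd hpow (con.mk' a)
    have hcon : con (a ^ Nat.card Qˣ) 1 := by
      apply hQeq'
      rw [map_pow, map_one]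
      calc (con.mk' a) ^ Nat.card Qˣ = ((u : Q)) ^ Nat.card Qˣ := by rw [hu]
        _ = ((u ^ Nat.card Qˣ : Qˣ) : Q) := (Units.val_pow_eq_pow_val _ _).symm
        _ = ((1 : Qˣ) : Q) := by rw [pow_card_eq_one']
        _ = 1 := Units.val_one
    rw [hϕcong _ _ hcon, hϕ1]
end
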